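/- arXiv:2401.00836 — 4 statements merged into one kernel-verified Lean document; each statement's English description precedes it below -/
import Mathlib

section
/- For any integer M ≥ 2 and parameters (a,b) with 0 < a < 1/M and 0 < b < 1/M, the three-dimensional heterochaos baker map f_{a,b} : [0,1]³ → [0,1]³ preserves the three-dimensional Lebesgue measure if and only if a + b = 1/M. -/
open MeasureTheory

noncomputable def tauMap (M : ℕ) (a : ℝ) (x : ℝ) : ℝ :=
  if x < M * a then Int.fract (x / a) else (x - M * a) / (1 - M * a)

noncomputable def faMap (M : ℕ) (a : ℝ) (p : ℝ × ℝ) : ℝ × ℝ :=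
  if p.1 < M * a then
    (Int.fract (p.1 / a), p.2 / M + (⌊p.1 / a⌋ : ℝ) / M)
  else
    ((p.1 - M * a) / (1 - M * a), if p.2 = 1 then 1 else Int.fract (M * p.2))

/-- The three-dimensional heterochaos baker map `f_{a,b}` on `[0,1]³`:
on `Ω_{α_k}` (i.e. `x_u < Ma`) it is `(f_a(x_u,x_c), (1-Mb) x_s)`, and on
`Ω_{β_k}` (with `k-1 = ⌊M x_c⌋`, `k = M` when `x_c = 1`) it is
`(f_a(x_u,x_c), b x_s + 1 + b (k - M - 1))`. -/
noncomputable def fabMap (M : ℕ) (a b : ℝ) (p : ℝ × ℝ × ℝ) : ℝ × ℝ × ℝ :=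
  let q := faMap M a (p.1, p.2.1)
  if p.1 < M * a then
    (q.1, q.2, (1 - M * b) * p.2.2)
  else
    (q.1, q.2, b * p.2.2 + 1 +
      b * ((if p.2.1 = 1 then (M : ℝ) else (⌊(M : ℝ) * p.2.1⌋ : ℝ) + 1) - M - 1))

/-!
On the cell `k a ≤ x < (k + 1) a` the map `f_{a,b}` is the diagonal affine map
`(x / a - k, (y + k) / M, (1 - M b) z)`, and on the cell `x ≥ M a, k / M ≤ y < (k + 1) / M` it is
`((x - M a) / (1 - M a), M y - k, 1 - M b + (k + z) b)`. These `2M` cells tile the half-open cube,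
so do their images (the first family fills `z < 1 - M b`, the second `z ≥ 1 - M b`), and the
Jacobians `(1 - M b) / (M a)` and `M b / (1 - M a)` both equal `1` when `M a + M b = 1`.
Conversely, the slab `z < 1 - M b` meets the cube in volume `1 - M b`, while its preimage in
the cube is `{x < M a, z < 1}`, of volume `M a`.
-/

open Set Function

namespace MeasureTheory.MeasurePreserving

variable {α β ι : Type*} [MeasurableSpace α] [MeasurableSpace β] {μ : Measure α} {ν : Measure β}
  {f g : α → β}

theorem restrict_of_eqOn {s : Set α} {t : Set β} (hg : MeasurePreserving g μ ν)
    (hf : Measurable f) (ht : MeasurableSet t) (hst : g ⁻¹' t = s) (hfg : EqOn f g s) :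
    MeasurePreserving f (μ.restrict s) (ν.restrict t) := by
  subst hst
  exact (hg.restrict_preimage ht).congr hf
    (ae_restrict_of_forall_mem (hg.measurable ht) fun x hx => (hfg hx).symm)

theorem restrict_union {s₁ s₂ : Set α} {t₁ t₂ : Set β} (hf : Measurable f)
    (hs : Disjoint s₁ s₂) (ht : Disjoint t₁ t₂) (hs₂ : MeasurableSet s₂) (ht₂ : MeasurableSet t₂)
    (h₁ : MeasurePreserving f (μ.restrict s₁) (ν.restrict t₁))
    (h₂ : MeasurePreserving f (μ.restrict s₂) (ν.restrict t₂)) :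
    MeasurePreserving f (μ.restrict (s₁ ∪ s₂)) (ν.restrict (t₁ ∪ t₂)) :=
  ⟨hf, by rw [Measure.restrict_union hs hs₂, Measure.map_add _ _ hf, h₁.map_eq, h₂.map_eq,
    Measure.restrict_union ht ht₂]⟩

theorem restrict_biUnion {T : Set ι} (hT : T.Countable) {s : ι → Set α} {t : ι → Set β}
    (hf : Measurable f) (hs : T.Pairwise (Disjoint on s)) (ht : T.Pairwise (Disjoint on t))
    (hsm : ∀ i, MeasurableSet (s i)) (htm : ∀ i, MeasurableSet (t i))
    (h : ∀ i ∈ T, MeasurePreserving f (μ.restrict (s i)) (ν.restrict (t i))) :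
    MeasurePreserving f (μ.restrict (⋃ i ∈ T, s i)) (ν.restrict (⋃ i ∈ T, t i)) := by
  have := hT.to_subtype
  refine ⟨hf, ?_⟩
  rw [Measure.restrict_biUnion this hs hsm, Measure.map_sum hf.aemeasurable,
    Measure.restrict_biUnion this ht htm]
  exact congrArg Measure.sum (funext fun i => (h i i.2).map_eq)

end MeasureTheory.MeasurePreserving

theorem Real.measurePreserving_mul_add {c : ℝ} (hc : c ≠ 0) (d : ℝ) :
    MeasurePreserving (fun x => c * x + d) volume (ENNReal.ofReal |c⁻¹| • volume) :=
  (measurePreserving_add_right _ d).comp ⟨measurable_const_mul c, Real.map_volume_mul_left hc⟩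

theorem Real.measurePreserving_mul_add_prod_prod {c₁ c₂ c₃ : ℝ} (hc : |c₁ * c₂ * c₃| = 1)
    (d₁ d₂ d₃ : ℝ) :
    MeasurePreserving (fun p : ℝ × ℝ × ℝ => (c₁ * p.1 + d₁, c₂ * p.2.1 + d₂, c₃ * p.2.2 + d₃)) := by
  have h₁ : c₁ ≠ 0 := by rintro rfl; simp at hc
  have h₂ : c₂ ≠ 0 := by rintro rfl; simp at hc
  have h₃ : c₃ ≠ 0 := by rintro rfl; simp at hc
  have key := (measurePreserving_mul_add h₁ d₁).prod
    ((measurePreserving_mul_add h₂ d₂).prod (measurePreserving_mul_add h₃ d₃))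
  have hscal : ENNReal.ofReal |c₃⁻¹| * ENNReal.ofReal |c₂⁻¹| * ENNReal.ofReal |c₁⁻¹| = 1 := by
    rw [← ENNReal.ofReal_mul (abs_nonneg _), ← ENNReal.ofReal_mul (by positivity), ← abs_mul,
      ← abs_mul, ← mul_inv, ← mul_inv, show c₃ * c₂ * c₁ = c₁ * c₂ * c₃ by ring, abs_inv, hc,
      inv_one, ENNReal.ofReal_one]
  simp only [Measure.prod_smul_left, Measure.prod_smul_right, smul_smul] at key
  rw [hscal, one_smul, ← Measure.volume_eq_prod, ← Measure.volume_eq_prod] at key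
  exact key

section Strip

variable {𝕜 : Type*} [Field 𝕜] [LinearOrder 𝕜] [IsStrictOrderedRing 𝕜] {e c x : 𝕜} {k n : ℕ}

def strip (e c : 𝕜) (k : ℕ) : Set 𝕜 := Ico (e + k * c) (e + (k + 1) * c)

theorem strip_subset_Ico (hc : 0 ≤ c) (hk : k < n) : strip e c k ⊆ Ico e (e + n * c) := by
  have hk' : (k : 𝕜) + 1 ≤ n := by exact_mod_cast hk
  exact Ico_subset_Ico (by simp only [le_add_iff_nonneg_right]; positivity) (by gcongr)

theorem biUnion_range_strip (hc : 0 ≤ c) (e : 𝕜) (n : ℕ) :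
    ⋃ k ∈ Finset.range n, strip e c k = Ico e (e + n * c) := by
  refine Subset.antisymm (iUnion₂_subset fun k hk => strip_subset_Ico hc (Finset.mem_range.1 hk)) ?_
  simpa [strip] using Ico_subset_biUnion_Ico n fun k => e + k * c

theorem pairwise_disjoint_strip (hc : 0 ≤ c) (e : 𝕜) : Pairwise (Disjoint on strip e c) := by
  have hmono : Monotone fun k : ℕ => e + k * c := fun i j hij => by dsimp only; gcongr
  have := hmono.pairwise_disjoint_on_Ico_succ
  simp only [Order.succ_eq_add_one, Nat.cast_add, Nat.cast_one] at this
  exact this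

theorem floor_div_eq_of_mem_strip [FloorRing 𝕜] (hc : 0 < c) (hx : x ∈ strip 0 c k) :
    ⌊x / c⌋ = k := by
  obtain ⟨h₁, h₂⟩ := hx
  rw [zero_add] at h₁ h₂
  rw [Int.floor_eq_iff, Int.cast_natCast, le_div_iff₀ hc, div_lt_iff₀ hc]
  exact ⟨h₁, h₂⟩

theorem mem_Ico_iff_of_affine {d y u v u' v' : 𝕜} (hc : 0 < c) (hy : y = c * x + d)
    (hu : u' = c * u + d) (hv : v' = c * v + d) : y ∈ Ico u' v' ↔ x ∈ Ico u v := by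
  subst hy hu hv
  simp only [mem_Ico, add_le_add_iff_right, add_lt_add_iff_right, mul_le_mul_iff_right₀ hc,
    mul_lt_mul_iff_right₀ hc]

end Strip

@[fun_prop]
theorem measurable_faMap (M : ℕ) (a : ℝ) : Measurable (faMap M a) := by
  unfold faMap
  refine Measurable.ite (measurableSet_lt measurable_fst measurable_const) ?_ ?_
  · fun_prop
  · exact Measurable.prodMk (by fun_prop) <| Measurable.ite
      (measurableSet_eq_fun measurable_snd measurable_const) measurable_const (by fun_prop)

theorem measurable_fabMap (M : ℕ) (a b : ℝ) : Measurable (fabMap M a b) := by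
  have hq : Measurable fun p : ℝ × ℝ × ℝ => faMap M a (p.1, p.2.1) := by fun_prop
  unfold fabMap
  refine Measurable.ite (measurableSet_lt measurable_fst measurable_const) (by fun_prop) ?_
  refine hq.fst.prodMk (hq.snd.prodMk ?_)
  have : Measurable fun p : ℝ × ℝ × ℝ =>
      if p.2.1 = 1 then (M : ℝ) else (⌊(M : ℝ) * p.2.1⌋ : ℝ) + 1 :=
    Measurable.ite (measurableSet_eq_fun (by fun_prop) measurable_const) measurable_const
      (by fun_prop)
  fun_prop

section Baker

variable {M : ℕ} {a b : ℝ} {k : ℕ}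

theorem cast_pos_of_mul_add_mul_eq_one (hab : M * a + M * b = 1) : (0 : ℝ) < M :=
  Nat.cast_pos.2 (Nat.pos_of_ne_zero (by rintro rfl; simp at hab))

-- `k` is 0-based: `alphaBranch M a b k` and `betaBranch M a b k` are `f_{a,b}` on the paper's
-- `Ω_{α_{k+1}}` and `Ω_{β_{k+1}}`.
noncomputable def alphaBranch (M : ℕ) (a b : ℝ) (k : ℕ) (p : ℝ × ℝ × ℝ) : ℝ × ℝ × ℝ :=
  (p.1 / a - k, (p.2.1 + k) / M, (1 - M * b) * p.2.2)

noncomputable def betaBranch (M : ℕ) (a b : ℝ) (k : ℕ) (p : ℝ × ℝ × ℝ) : ℝ × ℝ × ℝ :=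
  ((p.1 - M * a) / (1 - M * a), M * p.2.1 - k, 1 - M * b + (k + p.2.2) * b)

theorem measurePreserving_alphaBranch (ha : 0 < a) (hab : M * a + M * b = 1) (k : ℕ) :
    MeasurePreserving (alphaBranch M a b k) := by
  have := (cast_pos_of_mul_add_mul_eq_one hab).ne'
  have hdet : |a⁻¹ * (M : ℝ)⁻¹ * (1 - M * b)| = 1 := by
    rw [show 1 - M * b = M * a by linarith]
    field_simp
    simp
  convert Real.measurePreserving_mul_add_prod_prod hdet (-k) (k / M) 0 using 1
  funext p
  simp only [alphaBranch, Prod.mk.injEq]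
  refine ⟨by ring, by ring, by ring⟩

theorem measurePreserving_betaBranch (hb : 0 < b) (hab : M * a + M * b = 1) (k : ℕ) :
    MeasurePreserving (betaBranch M a b k) := by
  have := (cast_pos_of_mul_add_mul_eq_one hab).ne'
  have hdet : |(1 - M * a)⁻¹ * M * b| = 1 := by
    rw [show 1 - M * a = M * b by linarith]
    field_simp
    simp
  convert Real.measurePreserving_mul_add_prod_prod hdet (-(M * a) / (1 - M * a)) (-k)
    (1 - M * b + k * b) using 1
  funext p
  simp only [betaBranch, Prod.mk.injEq]
  refine ⟨by ring, by ring, by ring⟩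

theorem preimage_alphaBranch (ha : 0 < a) (hM : 0 < (M : ℝ)) (hMb : M * b < 1) (k : ℕ) :
    alphaBranch M a b k ⁻¹' (Ico 0 1 ×ˢ strip 0 (M : ℝ)⁻¹ k ×ˢ Ico 0 (1 - M * b)) =
      strip 0 a k ×ˢ Ico 0 1 ×ˢ Ico 0 1 := by
  ext p
  simp only [alphaBranch, strip, mem_preimage, mem_prod]
  refine and_congr (mem_Ico_iff_of_affine (inv_pos.2 ha) (d := -(k : ℝ)) ?_ ?_ ?_) <|
    and_congr (mem_Ico_iff_of_affine (inv_pos.2 hM) (d := (k : ℝ) / M) ?_ ?_ ?_)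
      (mem_Ico_iff_of_affine (sub_pos.2 hMb) (d := 0) ?_ ?_ ?_) <;> field_simp <;> ring

theorem preimage_betaBranch (hb : 0 < b) (hM : 0 < (M : ℝ)) (hMa : M * a < 1) (k : ℕ) :
    betaBranch M a b k ⁻¹' (Ico 0 1 ×ˢ Ico 0 1 ×ˢ strip (1 - M * b) b k) =
      Ico (M * a) 1 ×ˢ strip 0 (M : ℝ)⁻¹ k ×ˢ Ico 0 1 := by
  have := (sub_pos.2 hMa).ne'
  ext p
  simp only [betaBranch, strip, mem_preimage, mem_prod]
  refine and_congr (mem_Ico_iff_of_affine (inv_pos.2 (sub_pos.2 hMa))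
      (d := -(M * a) / (1 - M * a)) ?_ ?_ ?_) <|
    and_congr (mem_Ico_iff_of_affine hM (d := -(k : ℝ)) ?_ ?_ ?_)
      (mem_Ico_iff_of_affine hb (d := 1 - M * b + k * b) ?_ ?_ ?_) <;> field_simp <;> ring

theorem fabMap_eqOn_alphaBranch (ha : 0 < a) (hk : k < M) :
    EqOn (fabMap M a b) (alphaBranch M a b k) (strip 0 a k ×ˢ Ico 0 1 ×ˢ Ico 0 1) := by
  rintro p ⟨hx, -⟩
  have hxM : p.1 < M * a := by simpa using (strip_subset_Ico ha.le hk hx).2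
  have hfloor := floor_div_eq_of_mem_strip ha hx
  simp only [fabMap, faMap, if_pos hxM, alphaBranch, Int.fract, hfloor, Int.cast_natCast,
    Prod.mk.injEq]
  refine ⟨trivial, by ring, trivial⟩

theorem fabMap_eqOn_betaBranch (hM : 0 < (M : ℝ)) (hk : k < M) :
    EqOn (fabMap M a b) (betaBranch M a b k) (Ico (M * a) 1 ×ˢ strip 0 (M : ℝ)⁻¹ k ×ˢ Ico 0 1) := by
  rintro p ⟨hx, hy, -⟩
  have hxM : ¬ p.1 < M * a := not_lt.2 hx.1
  have hy1 : p.2.1 ≠ 1 := by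
    have := (strip_subset_Ico (inv_pos.2 hM).le hk hy).2
    rw [zero_add, mul_inv_cancel₀ hM.ne'] at this
    exact this.ne
  have hfloor : ⌊(M : ℝ) * p.2.1⌋ = k := by
    rw [mul_comm, ← div_inv_eq_mul]
    exact floor_div_eq_of_mem_strip (inv_pos.2 hM) hy
  simp only [fabMap, faMap, if_neg hxM, if_neg hy1, betaBranch, Int.fract, hfloor,
    Int.cast_natCast, Prod.mk.injEq]
  refine ⟨trivial, trivial, by ring⟩

theorem measurePreserving_fabMap_alpha (ha : 0 < a) (hab : M * a + M * b = 1) :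
    MeasurePreserving (fabMap M a b)
      (volume.restrict (Ico 0 (M * a) ×ˢ Ico 0 1 ×ˢ Ico 0 1))
      (volume.restrict (Ico 0 1 ×ˢ Ico 0 1 ×ˢ Ico 0 (1 - M * b))) := by
  have hM := cast_pos_of_mul_add_mul_eq_one hab
  have hMb : M * b < 1 := by nlinarith
  have hcells : ⋃ k ∈ Finset.range M, strip 0 a k ×ˢ (Ico (0 : ℝ) 1 ×ˢ Ico (0 : ℝ) 1) =
      Ico 0 (M * a) ×ˢ Ico 0 1 ×ˢ Ico 0 1 := by
    rw [← iUnion₂_prod_const, biUnion_range_strip ha.le, zero_add]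
  have himages : ⋃ k ∈ Finset.range M, Ico (0 : ℝ) 1 ×ˢ strip 0 (M : ℝ)⁻¹ k ×ˢ Ico 0 (1 - M * b) =
      Ico 0 1 ×ˢ Ico 0 1 ×ˢ Ico 0 (1 - M * b) := by
    rw [← prod_iUnion₂, ← iUnion₂_prod_const, biUnion_range_strip (inv_pos.2 hM).le, zero_add,
      mul_inv_cancel₀ hM.ne']
  rw [← hcells, ← himages]
  refine MeasurePreserving.restrict_biUnion (Finset.countable_toSet _) (measurable_fabMap M a b)
    (fun i _ j _ hij => (pairwise_disjoint_strip ha.le 0 hij).set_prod_left _ _)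
    (fun i _ j _ hij =>
      ((pairwise_disjoint_strip (inv_pos.2 hM).le 0 hij).set_prod_left _ _).set_prod_right _ _)
    (fun k => measurableSet_Ico.prod (measurableSet_Ico.prod measurableSet_Ico))
    (fun k => measurableSet_Ico.prod (measurableSet_Ico.prod measurableSet_Ico)) fun k hk => ?_
  exact (measurePreserving_alphaBranch ha hab k).restrict_of_eqOn (measurable_fabMap M a b)
    (measurableSet_Ico.prod (measurableSet_Ico.prod measurableSet_Ico))
    (preimage_alphaBranch ha hM hMb k) (fabMap_eqOn_alphaBranch ha (Finset.mem_range.1 hk))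

theorem measurePreserving_fabMap_beta (hb : 0 < b) (hab : M * a + M * b = 1) :
    MeasurePreserving (fabMap M a b)
      (volume.restrict (Ico (M * a) 1 ×ˢ Ico 0 1 ×ˢ Ico 0 1))
      (volume.restrict (Ico 0 1 ×ˢ Ico 0 1 ×ˢ Ico (1 - M * b) 1)) := by
  have hM := cast_pos_of_mul_add_mul_eq_one hab
  have hMa : M * a < 1 := by nlinarith
  have hcells : ⋃ k ∈ Finset.range M, Ico (M * a) 1 ×ˢ strip 0 (M : ℝ)⁻¹ k ×ˢ Ico (0 : ℝ) 1 =
      Ico (M * a) 1 ×ˢ Ico 0 1 ×ˢ Ico 0 1 := by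
    rw [← prod_iUnion₂, ← iUnion₂_prod_const, biUnion_range_strip (inv_pos.2 hM).le, zero_add,
      mul_inv_cancel₀ hM.ne']
  have himages : ⋃ k ∈ Finset.range M, Ico (0 : ℝ) 1 ×ˢ Ico (0 : ℝ) 1 ×ˢ strip (1 - M * b) b k =
      Ico 0 1 ×ˢ Ico 0 1 ×ˢ Ico (1 - M * b) 1 := by
    rw [← prod_iUnion₂, ← prod_iUnion₂, biUnion_range_strip hb.le, sub_add_cancel]
  rw [← hcells, ← himages]
  refine MeasurePreserving.restrict_biUnion (Finset.countable_toSet _) (measurable_fabMap M a b)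
    (fun i _ j _ hij =>
      ((pairwise_disjoint_strip (inv_pos.2 hM).le 0 hij).set_prod_left _ _).set_prod_right _ _)
    (fun i _ j _ hij =>
      ((pairwise_disjoint_strip hb.le _ hij).set_prod_right _ _).set_prod_right _ _)
    (fun k => measurableSet_Ico.prod (measurableSet_Ico.prod measurableSet_Ico))
    (fun k => measurableSet_Ico.prod (measurableSet_Ico.prod measurableSet_Ico)) fun k hk => ?_
  exact (measurePreserving_betaBranch hb hab k).restrict_of_eqOn (measurable_fabMap M a b)
    (measurableSet_Ico.prod (measurableSet_Ico.prod measurableSet_Ico))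
    (preimage_betaBranch hb hM hMa k) (fabMap_eqOn_betaBranch hM (Finset.mem_range.1 hk))

theorem measurePreserving_fabMap_Ico (ha : 0 < a) (hb : 0 < b) (hab : M * a + M * b = 1) :
    MeasurePreserving (fabMap M a b)
      (volume.restrict (Ico 0 1 ×ˢ Ico 0 1 ×ˢ Ico 0 1))
      (volume.restrict (Ico 0 1 ×ˢ Ico 0 1 ×ˢ Ico 0 1)) := by
  have hMa : 0 ≤ M * a := by positivity
  have hMb : 0 ≤ M * b := by positivity
  have h := (measurePreserving_fabMap_alpha ha hab).restrict_union (measurable_fabMap M a b)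
    (Ico_disjoint_Ico_same.set_prod_left _ _)
    ((Ico_disjoint_Ico_same.set_prod_right _ _).set_prod_right _ _)
    (measurableSet_Ico.prod (measurableSet_Ico.prod measurableSet_Ico))
    (measurableSet_Ico.prod (measurableSet_Ico.prod measurableSet_Ico))
    (measurePreserving_fabMap_beta hb hab)
  rwa [← union_prod, Ico_union_Ico_eq_Ico hMa (by linarith), ← prod_union, ← prod_union,
    Ico_union_Ico_eq_Ico (by linarith) (by linarith)] at h

theorem Icc_cube_ae_eq_Ico_cube :
    (Icc 0 1 ×ˢ Icc 0 1 ×ˢ Icc 0 1 : Set (ℝ × ℝ × ℝ)) =ᵐ[volume] Ico 0 1 ×ˢ Ico 0 1 ×ˢ Ico 0 1 :=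
  Measure.set_prod_ae_eq Ico_ae_eq_Icc.symm
    (Measure.set_prod_ae_eq Ico_ae_eq_Icc.symm Ico_ae_eq_Icc.symm)

theorem preimage_lower_slab_inter_cube (hM : 0 < M) (hb : 0 ≤ b) (hMa : M * a ≤ 1)
    (hMb : M * b < 1) :
    fabMap M a b ⁻¹' (univ ×ˢ univ ×ˢ Iio (1 - M * b)) ∩ (Icc 0 1 ×ˢ Icc 0 1 ×ˢ Icc 0 1) =
      Ico 0 (M * a) ×ˢ Icc 0 1 ×ˢ Ico 0 1 := by
  have hM1 : (1 : ℝ) ≤ M := by exact_mod_cast hM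
  ext p
  obtain ⟨x, y, z⟩ := p
  simp only [mem_inter_iff, mem_preimage, mem_prod, mem_univ, mem_Iio, mem_Icc, mem_Ico,
    true_and]
  by_cases hx : x < M * a
  · simp only [fabMap, if_pos hx, mul_lt_iff_lt_one_right (sub_pos.2 hMb)]
    constructor
    · rintro ⟨hz, ⟨hx0, -⟩, hy, hz0, -⟩
      exact ⟨⟨hx0, hx⟩, hy, hz0, hz⟩
    · rintro ⟨⟨hx0, -⟩, hy, hz0, hz⟩
      exact ⟨hz, ⟨hx0, by linarith⟩, hy, hz0, hz.le⟩
  · simp only [fabMap, hx, if_false, and_false, false_and, iff_false]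
    rintro ⟨hlt, -, ⟨hy0, -⟩, hz0, -⟩
    have hcell : 1 ≤ if y = 1 then (M : ℝ) else (⌊(M : ℝ) * y⌋ : ℝ) + 1 := by
      split_ifs
      · exact hM1
      · have : (0 : ℝ) ≤ ⌊(M : ℝ) * y⌋ := by exact_mod_cast Int.floor_nonneg.2 (by positivity)
        linarith
    nlinarith

theorem mul_add_mul_eq_one_of_measurePreserving (hM : 0 < M) (ha : 0 ≤ a) (hb : 0 ≤ b)
    (hMa : M * a ≤ 1) (hMb : M * b < 1)
    (h : MeasurePreserving (fabMap M a b)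
      (volume.restrict (Icc 0 1 ×ˢ Icc 0 1 ×ˢ Icc 0 1))
      (volume.restrict (Icc 0 1 ×ˢ Icc 0 1 ×ˢ Icc 0 1))) :
    M * a + M * b = 1 := by
  have hslab : MeasurableSet (univ ×ˢ univ ×ˢ Iio (1 - M * b) : Set (ℝ × ℝ × ℝ)) :=
    MeasurableSet.univ.prod (MeasurableSet.univ.prod measurableSet_Iio)
  have hvol := h.measure_preimage hslab.nullMeasurableSet
  rw [Measure.restrict_apply (h.measurable hslab), Measure.restrict_apply hslab,
    preimage_lower_slab_inter_cube hM hb hMa hMb] at hvol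
  have hslab_cube : Iio (1 - M * b) ∩ Icc (0 : ℝ) 1 = Ico 0 (1 - M * b) := by
    ext z
    simp only [mem_inter_iff, mem_Iio, mem_Icc, mem_Ico]
    constructor
    · rintro ⟨hz, hz0, -⟩
      exact ⟨hz0, hz⟩
    · rintro ⟨hz0, hz⟩
      exact ⟨hz, hz0, by nlinarith⟩
  rw [prod_inter_prod, prod_inter_prod, univ_inter, hslab_cube] at hvol
  simp only [Measure.volume_eq_prod, Measure.prod_prod, Real.volume_Ico, Real.volume_Icc,
    sub_zero, ENNReal.ofReal_one, one_mul, mul_one] at hvol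
  rw [ENNReal.ofReal_eq_ofReal_iff (by positivity) (by linarith)] at hvol
  linarith

end Baker

theorem fabMap_measurePreserving_iff_general (M : ℕ) (a b : ℝ)
    (ha : a ∈ Set.Ioo (0 : ℝ) (1 / M)) (hb : b ∈ Set.Ioo (0 : ℝ) (1 / M)) :
    MeasurePreserving (fabMap M a b)
      (volume.restrict (Set.Icc (0 : ℝ) 1 ×ˢ Set.Icc (0 : ℝ) 1 ×ˢ Set.Icc (0 : ℝ) 1))
      (volume.restrict (Set.Icc (0 : ℝ) 1 ×ˢ Set.Icc (0 : ℝ) 1 ×ˢ Set.Icc (0 : ℝ) 1))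
      ↔ a + b = 1 / M := by
  obtain ⟨ha₀, ha₁⟩ := ha
  obtain ⟨hb₀, hb₁⟩ := hb
  have hM : (0 : ℝ) < M := one_div_pos.1 (ha₀.trans ha₁)
  have hMa : M * a < 1 := by rwa [lt_div_iff₀' hM] at ha₁
  have hMb : M * b < 1 := by rwa [lt_div_iff₀' hM] at hb₁
  rw [eq_div_iff hM.ne', add_mul, mul_comm a, mul_comm b]
  refine ⟨mul_add_mul_eq_one_of_measurePreserving (Nat.cast_pos.1 hM) ha₀.le hb₀.le hMa.le hMb,
    fun hab => ?_⟩
  rw [Measure.restrict_congr_set Icc_cube_ae_eq_Ico_cube]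
  exact measurePreserving_fabMap_Ico ha₀ hb₀ hab

/-- for any integer `M ≥ 2` and `(a,b) ∈ (0,1/M)²`, the three-dimensional
heterochaos baker map `f_{a,b}` preserves Lebesgue measure on `[0,1]³` iff `a + b = 1/M`. -/
theorem fabMap_measurePreserving_iff (M : ℕ) (hM : 2 ≤ M) (a b : ℝ)
    (ha : a ∈ Set.Ioo (0 : ℝ) (1 / M)) (hb : b ∈ Set.Ioo (0 : ℝ) (1 / M)) :
    MeasurePreserving (fabMap M a b)
      (volume.restrict (Set.Icc (0 : ℝ) 1 ×ˢ Set.Icc (0 : ℝ) 1 ×ˢ Set.Icc (0 : ℝ) 1))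
      (volume.restrict (Set.Icc (0 : ℝ) 1 ×ˢ Set.Icc (0 : ℝ) 1 ×ˢ Set.Icc (0 : ℝ) 1))
      ↔ a + b = 1 / M :=
  fabMap_measurePreserving_iff_general M a b ha hb
end

section
/- Let σ be the shift on the two-sided Dyck shift Σ_D on 2M symbols. If ν is an ergodic shift-invariant Borel probability measure on Σ_D, then exactly one of the following holds: ν(A_0) = 1, ν(A_α) = 1, or ν(A_β) = 1, where A_0, A_α, A_β are the three pairwise disjoint shift-invariant Borel sets defined via the height functions H_i. -/
open MeasureTheory Filter

/-- Alphabet of `2M` symbols: `Sum.inl k` is the left bracket `α_{k+1}`,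
`Sum.inr k` is the right bracket `β_{k+1}`. -/
abbrev DyckAlphabet (M : ℕ) := Fin M ⊕ Fin M

/-- Stack-based legality check for a word of brackets: processing left to right,
left brackets are pushed; a right bracket either matches the top left bracket, or is
read with an empty stack (an unmatched right bracket, which is legal). The word reduces
to `0` in the Dyck monoid iff this returns `false`. -/
def dyckValid (M : ℕ) : List (DyckAlphabet M) → List (Fin M) → Bool
  | [], _ => true
  | (Sum.inl i) :: rest, st => dyckValid M rest (i :: st)
  | (Sum.inr j) :: rest, st =>
    match st with
    | [] => dyckValid M rest []
    | i :: s => if i = j then dyckValid M rest s else false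

/-- The finite subword `ω_j ω_{j+1} ⋯ ω_{j+n-1}` of a two-sided sequence. -/
def dyckWord (M : ℕ) (ω : ℤ → DyckAlphabet M) (j : ℤ) (n : ℕ) : List (DyckAlphabet M) :=
  (List.range n).map fun t => ω (j + t)

/-- The two-sided Dyck shift `Σ_D`: all bi-infinite sequences every finite subword of
which reduces to a nonzero element of the Dyck monoid. -/
def SigmaD (M : ℕ) : Set (ℤ → DyckAlphabet M) :=
  {ω | ∀ (j : ℤ) (n : ℕ), dyckValid M (dyckWord M ω j n) [] = true}

/-- `+1` on left brackets `α_k`, `-1` on right brackets `β_k`. -/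
def dyckSgn (M : ℕ) : DyckAlphabet M → ℤ
  | Sum.inl _ => 1
  | Sum.inr _ => -1

/-- The height functions `H_i`. -/
def Hfun (M : ℕ) (ω : ℤ → DyckAlphabet M) (i : ℤ) : ℤ :=
  if 0 ≤ i then ∑ j ∈ Finset.range i.toNat, dyckSgn M (ω j)
  else -∑ j ∈ Finset.range (-i).toNat, dyckSgn M (ω (i + j))

/-- The set `A_0`. -/
def Azero (M : ℕ) : Set (ℤ → DyckAlphabet M) :=
  ⋂ i : ℤ,
    ((⋃ j : ℕ, {ω | Hfun M ω (i + (j + 1)) = Hfun M ω i}) ∩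
      (⋃ j : ℕ, {ω | Hfun M ω (i - (j + 1)) = Hfun M ω i}))

/-- The set `A_α`: `H_i → ∞` as `i → ∞` and `H_i → -∞` as `i → -∞`. -/
def Aalpha (M : ℕ) : Set (ℤ → DyckAlphabet M) :=
  {ω | Tendsto (fun i : ℤ => Hfun M ω i) atTop atTop ∧
       Tendsto (fun i : ℤ => Hfun M ω i) atBot atBot}

/-- The set `A_β`: `H_i → -∞` as `i → ∞` and `H_i → ∞` as `i → -∞`. -/
def Abeta (M : ℕ) : Set (ℤ → DyckAlphabet M) :=
  {ω | Tendsto (fun i : ℤ => Hfun M ω i) atTop atBot ∧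
       Tendsto (fun i : ℤ => Hfun M ω i) atBot atTop}

/-- The left shift on two-sided sequences. -/
def dyckShift {α : Type*} (ω : ℤ → α) : ℤ → α := fun i => ω (i + 1)

/-!
Write `c = ∫ s(ω₀) dν` for the mean step of the height walk `H`. For a `±1` walk on `[0, N]`,
the number of strict future minima minus the number of strict record minima is `H_N - H_0`;
integrating this against the invariant measure and letting `N → ∞` gives the ladder identity
`ν(H_j > 0 for all j > 0) - ν(H_j > 0 for all j < 0) = c`.

If the first set has positive measure, ergodicity makes almost every orbit visit it infinitely
often, i.e. the walk has infinitely many strict future minima, so `H_i → ∞`; the same holds in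
negative time for the second set. Applied to `s` and to `-s`, this gives `A_α` when `c > 0` and
`A_β` when `c < 0`. When `c = 0`, the two sets have equal measure, and if it were positive, `H`
would tend to `+∞` on both sides almost surely; the position of its leftmost global minimum would
then be a shift-equivariant integer, which no shift-invariant probability measure allows. So all
four escape sets are null, and at every time the walk returns to its current level on both sides:
this is `A_0`.
-/

open Topology

section UnitStepWalk

variable {g : ℕ → ℤ}

def runningMin (g : ℕ → ℤ) : ℕ → ℤ
  | 0 => g 0
  | N + 1 => min (runningMin g N) (g (N + 1))

lemma runningMin_le : ∀ {N j : ℕ}, j ≤ N → runningMin g N ≤ g j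
  | 0, j, hj => by rw [Nat.le_zero.1 hj]; rfl
  | N + 1, j, hj => by
    rcases Nat.of_le_succ hj with hj | rfl
    · exact (min_le_left _ _).trans (runningMin_le hj)
    · exact min_le_right _ _

lemma exists_eq_runningMin : ∀ N : ℕ, ∃ j ≤ N, g j = runningMin g N
  | 0 => ⟨0, le_rfl, rfl⟩
  | N + 1 => by
    obtain ⟨j, hjN, hj⟩ := exists_eq_runningMin N
    rcases le_total (runningMin g N) (g (N + 1)) with h | h
    · exact ⟨j, hjN.trans N.le_succ, by rw [runningMin, min_eq_left h, hj]⟩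
    · exact ⟨N + 1, le_rfl, by rw [runningMin, min_eq_right h]⟩

lemma lt_runningMin_iff {N : ℕ} {v : ℤ} : v < runningMin g N ↔ ∀ j ≤ N, v < g j := by
  refine ⟨fun h j hj => h.trans_le (runningMin_le hj), fun h => ?_⟩
  obtain ⟨j, hj, hgj⟩ := exists_eq_runningMin (g := g) N
  exact hgj ▸ h j hj

def futureMinTimes (g : ℕ → ℤ) (N : ℕ) : Finset ℕ :=
  (Finset.range N).filter fun i => ∀ j ∈ Finset.Ioc i N, g i < g j

def recordTimes (g : ℕ → ℤ) (N : ℕ) : Finset ℕ :=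
  (Finset.Icc 1 N).filter fun k => ∀ j < k, g k < g j

lemma futureMinTimes_succ (N : ℕ) :
    futureMinTimes g (N + 1) = (insert N (futureMinTimes g N)).filter (g · < g (N + 1)) := by
  ext i
  simp only [futureMinTimes, Finset.mem_filter, Finset.mem_insert, Finset.mem_range,
    Finset.mem_Ioc]
  constructor
  · rintro ⟨hi, hlt⟩
    refine ⟨?_, hlt _ ⟨hi, le_rfl⟩⟩
    rcases Nat.lt_succ_iff_lt_or_eq.1 hi with hi | rfl
    · exact Or.inr ⟨hi, fun j hj => hlt j ⟨hj.1, hj.2.trans N.le_succ⟩⟩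
    · exact Or.inl rfl
  · rintro ⟨hi | ⟨hi, hlt⟩, hN⟩
    · subst hi
      refine ⟨Nat.lt_add_one _, fun j hj => ?_⟩
      rwa [show j = i + 1 by omega]
    · refine ⟨hi.trans (Nat.lt_add_one N), fun j hj => ?_⟩
      rcases Nat.of_le_succ hj.2 with hjN | rfl
      · exact hlt j ⟨hj.1, hjN⟩
      · exact hN

lemma recordTimes_succ (N : ℕ) :
    recordTimes g (N + 1) =
      if g (N + 1) < runningMin g N then insert (N + 1) (recordTimes g N) else recordTimes g N := by
  have hrec : (∀ j < N + 1, g (N + 1) < g j) ↔ g (N + 1) < runningMin g N := by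
    simp only [Nat.lt_succ_iff]; exact lt_runningMin_iff.symm
  ext k
  split_ifs with h
  all_goals
    simp only [recordTimes, Finset.mem_filter, Finset.mem_insert, Finset.mem_Icc]
    constructor
  · rintro ⟨⟨hk1, hk⟩, hlt⟩
    rcases Nat.of_le_succ hk with hk | rfl
    · exact Or.inr ⟨⟨hk1, hk⟩, hlt⟩
    · exact Or.inl rfl
  · rintro (rfl | ⟨⟨hk1, hk⟩, hlt⟩)
    · exact ⟨⟨N.succ_pos, le_rfl⟩, hrec.2 h⟩
    · exact ⟨⟨hk1, hk.trans N.le_succ⟩, hlt⟩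
  · rintro ⟨⟨hk1, hk⟩, hlt⟩
    rcases Nat.of_le_succ hk with hk | rfl
    · exact ⟨⟨hk1, hk⟩, hlt⟩
    · exact absurd (hrec.1 hlt) h
  · rintro ⟨⟨hk1, hk⟩, hlt⟩
    exact ⟨⟨hk1, hk.trans N.le_succ⟩, hlt⟩

variable (hg : ∀ n, g (n + 1) = g n + 1 ∨ g (n + 1) = g n - 1)
include hg

lemma image_futureMinTimes : ∀ N, (futureMinTimes g N).image g = Finset.Ico (runningMin g N) (g N)
  | 0 => by simp [futureMinTimes, runningMin]
  | N + 1 => by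
    have hm : runningMin g N ≤ g N := runningMin_le le_rfl
    rw [futureMinTimes_succ, ← Finset.filter_image (p := (· < g (N + 1))), Finset.image_insert,
      image_futureMinTimes N]
    ext v
    simp only [Finset.mem_filter, Finset.mem_insert, Finset.mem_Ico, runningMin]
    rcases hg N with h | h <;> omega

omit hg in
lemma injOn_futureMinTimes (N : ℕ) : Set.InjOn g (futureMinTimes g N) := by
  intro i hi j hj hij
  simp only [futureMinTimes, Finset.coe_filter, Finset.mem_range, Finset.mem_Ioc,
    Set.mem_ofPred_eq] at hi hj
  by_contra hne
  rcases Nat.lt_or_gt_of_ne hne with h | h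
  · exact (hi.2 j ⟨h, hj.1.le⟩).ne hij
  · exact (hj.2 i ⟨h, hi.1.le⟩).ne hij.symm

lemma card_futureMinTimes (N : ℕ) : ((futureMinTimes g N).card : ℤ) = g N - runningMin g N := by
  rw [← Finset.card_image_of_injOn (injOn_futureMinTimes N), image_futureMinTimes hg,
    Int.card_Ico, Int.toNat_of_nonneg (sub_nonneg.2 (runningMin_le le_rfl))]

lemma card_recordTimes : ∀ N, ((recordTimes g N).card : ℤ) = g 0 - runningMin g N
  | 0 => by simp [recordTimes, runningMin]
  | N + 1 => by
    have hm : runningMin g N ≤ g N := runningMin_le le_rfl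
    have ih := card_recordTimes N
    rw [recordTimes_succ]
    split_ifs with h
    · rw [Finset.card_insert_of_notMem (by simp [recordTimes]), Nat.cast_succ, ih, runningMin]
      rcases hg N with h' | h' <;> omega
    · rw [ih, runningMin]; omega

theorem card_futureMinTimes_sub_card_recordTimes (N : ℕ) :
    ((futureMinTimes g N).card : ℤ) - (recordTimes g N).card = g N - g 0 := by
  rw [card_futureMinTimes hg, card_recordTimes hg]; ring

lemma exists_pos_eq_zero_of_unit_steps (h0 : g 0 = 0) (hpos : ¬ ∀ j, 0 < j → 0 < g j)
    (hneg : ¬ ∀ j, 0 < j → g j < 0) : ∃ j, 0 < j ∧ g j = 0 := by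
  by_contra! hzero
  rcases hg 0 with h1 | h1
  · refine hpos fun j hj => ?_
    induction j, hj using Nat.le_induction with
    | base => show 0 < g (0 + 1); omega
    | succ n hn ih => have := hzero (n + 1) (by omega); rcases hg n with h | h <;> omega
  · refine hneg fun j hj => ?_
    induction j, hj using Nat.le_induction with
    | base => show g (0 + 1) < 0; omega
    | succ n hn ih => have := hzero (n + 1) (by omega); rcases hg n with h | h <;> omega

end UnitStepWalk

section IntegerWalk

lemma tendsto_atTop_of_frequently_forall_lt {ι : Type*} [LinearOrder ι] [NoMaxOrder ι]
    {h : ι → ℤ} (hfreq : ∃ᶠ k in atTop, ∀ j, k < j → h k < h j) : Tendsto h atTop atTop := by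
  obtain ⟨k₀, hk₀⟩ := hfreq.exists
  have hclimb : ∀ n : ℕ, ∃ k, (∀ j, k < j → h k < h j) ∧ h k₀ + n ≤ h k := by
    intro n
    induction n with
    | zero => exact ⟨k₀, hk₀, by simp⟩
    | succ n ih =>
      obtain ⟨k, hk, hkn⟩ := ih
      obtain ⟨k', hk', hkk'⟩ := (hfreq.and_eventually (eventually_gt_atTop k)).exists
      exact ⟨k', hk', by have := hk k' hkk'; push_cast; omega⟩
  refine tendsto_atTop.2 fun b => ?_
  obtain ⟨k, hk, hkb⟩ := hclimb (b - h k₀).toNat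
  filter_upwards [eventually_gt_atTop k] with j hj
  have := hk j hj
  omega

lemma tendsto_atBot_atTop_of_frequently_forall_lt {h : ℤ → ℤ}
    (hfreq : ∃ᶠ k in atBot, ∀ j, j < k → h k < h j) : Tendsto h atBot atTop :=
  tendsto_atTop_of_frequently_forall_lt (ι := ℤᵒᵈ) hfreq

def IsLeastArgmin (h : ℤ → ℤ) (k : ℤ) : Prop := ∀ j, h k ≤ h j ∧ (j < k → h k < h j)

lemma IsLeastArgmin.unique {h : ℤ → ℤ} {k k' : ℤ} (hk : IsLeastArgmin h k)
    (hk' : IsLeastArgmin h k') : k = k' := by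
  by_contra hne
  rcases lt_or_gt_of_ne hne with hlt | hlt
  · exact ((hk' k).2 hlt).not_ge (hk k').1
  · exact ((hk k').2 hlt).not_ge (hk' k).1

lemma isLeastArgmin_comp_add_sub {h : ℤ → ℤ} {k c m : ℤ} :
    IsLeastArgmin (fun i => h (i + k) - c) m ↔ IsLeastArgmin h (m + k) := by
  refine ⟨fun H j => ?_, fun H j => ?_⟩
  · have := H (j - k)
    simp only [sub_add_cancel] at this
    omega
  · have := H (j + k)
    simp only
    omega

lemma exists_isLeastArgmin {h : ℤ → ℤ} (htop : Tendsto h atTop atTop)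
    (hbot : Tendsto h atBot atTop) : ∃ k, IsLeastArgmin h k := by
  obtain ⟨x, hx⟩ := continuous_of_discreteTopology.exists_forall_le (f := h)
    (by rw [cocompact_eq_atBot_atTop]; exact hbot.sup htop)
  obtain ⟨b, hb⟩ := eventually_atBot.1 (hbot.eventually (eventually_gt_atTop (h x)))
  obtain ⟨k, hk, hleast⟩ := Int.exists_least_of_bdd (P := fun k => h k = h x)
    ⟨b, fun z hz => by by_contra hzb; exact (hb z (by omega)).ne' hz⟩ ⟨x, rfl⟩
  refine ⟨k, fun j => ⟨hk ▸ hx j, fun hjk => ?_⟩⟩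
  rcases (hk ▸ hx j).lt_or_eq with hlt | heq
  · exact hlt
  · exact absurd (hleast j (heq.symm.trans hk)) (not_le.2 hjk)

lemma not_eventually_ne_of_forall_exists_gt_eq {h : ℤ → ℤ}
    (hrec : ∀ i, ∃ j, i < j ∧ h j = h i) : ¬ ∀ᶠ j in atTop, h j ≠ h 0 := by
  intro hev
  obtain ⟨b, hb⟩ := eventually_atTop.1 hev
  obtain ⟨k, hk, hgreatest⟩ := Int.exists_greatest_of_bdd (P := fun k => h k = h 0)
    ⟨b, fun z hz => by by_contra hzb; exact hb z (by omega) hz⟩ ⟨0, rfl⟩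
  obtain ⟨j, hkj, hj⟩ := hrec k
  exact (hgreatest j (hj.trans hk)).not_gt hkj

end IntegerWalk

section MeasureFacts

lemma Ergodic.ae_frequently_iterate_mem {X : Type*} [MeasurableSpace X] {f : X → X}
    {μ : Measure X} [IsFiniteMeasure μ] (hf : Ergodic f μ) {t : Set X} (ht : MeasurableSet t)
    (h0 : μ t ≠ 0) : ∀ᵐ x ∂μ, ∃ᶠ n in atTop, f^[n] x ∈ t := by
  set U := ⋃ n, f^[n] ⁻¹' t
  have hU : MeasurableSet U := .iUnion fun n => hf.measurable.iterate n ht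
  have hfU : f ⁻¹' U ⊆ U := by
    simp only [U, Set.preimage_iUnion, ← Set.preimage_comp, ← Function.iterate_succ]
    exact Set.iUnion_subset fun n => Set.subset_iUnion (fun n => f^[n] ⁻¹' t) (n + 1)
  have hvisit : ∀ᵐ x ∂μ, x ∈ U := by
    rcases hf.ae_empty_or_univ_of_preimage_ae_le hU.nullMeasurableSet hfU.eventuallyLE with h | h
    · exact absurd (measure_mono_null (Set.subset_iUnion (fun n => f^[n] ⁻¹' t) 0)
        (ae_eq_empty.1 h)) h0
    · exact mem_ae_iff.2 (ae_eq_univ.1 h)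
  have hrec := hf.toMeasurePreserving.conservative.ae_forall_image_mem_imp_frequently_image_mem
    ht.nullMeasurableSet
  filter_upwards [hvisit, hrec] with x hx hrec
  obtain ⟨n, hn⟩ := Set.mem_iUnion.1 hx
  exact hrec n hn

lemma measure_iUnion_ne_one_of_measure_eq {X ι : Type*} [MeasurableSpace X] [Countable ι]
    [Infinite ι] {μ : Measure X} {A : ι → Set X} (hA : ∀ i, MeasurableSet (A i))
    (hd : Pairwise (Function.onFun Disjoint A)) (heq : ∀ i j, μ (A i) = μ (A j)) :
    μ (⋃ i, A i) ≠ 1 := by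
  obtain ⟨i₀⟩ := (inferInstance : Nonempty ι)
  rw [measure_iUnion hd hA, tsum_congr fun i => heq i i₀]
  by_cases h : μ (A i₀) = 0
  · simp [h]
  · simp [ENNReal.tsum_const_eq_top_of_ne_zero h]

lemma measure_eq_one_of_ae_mem {X : Type*} [MeasurableSpace X] {μ : Measure X}
    [IsProbabilityMeasure μ] {A : Set X} (h : ∀ᵐ x ∂μ, x ∈ A) : μ A = 1 :=
  (measure_congr (ae_eq_univ.2 h)).trans measure_univ

lemma measure_ne_zero_of_measureReal_pos {X : Type*} [MeasurableSpace X] {μ : Measure X}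
    {A : Set X} (h : 0 < μ.real A) : μ A ≠ 0 :=
  fun h0 => by simp [measureReal_def, h0] at h

lemma measure_trichotomy_of_ae {X : Type*} [MeasurableSpace X] {μ : Measure X}
    [IsProbabilityMeasure μ] {A B C : Set X} (hAB : Disjoint A B) (hAC : Disjoint A C)
    (hBC : Disjoint B C) (h : (∀ᵐ x ∂μ, x ∈ A) ∨ (∀ᵐ x ∂μ, x ∈ B) ∨ ∀ᵐ x ∂μ, x ∈ C) :
    (μ A = 1 ∧ μ B ≠ 1 ∧ μ C ≠ 1) ∨ (μ A ≠ 1 ∧ μ B = 1 ∧ μ C ≠ 1) ∨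
      (μ A ≠ 1 ∧ μ B ≠ 1 ∧ μ C = 1) := by
  have hne {D E : Set X} (hD : ∀ᵐ x ∂μ, x ∈ D) (hDE : Disjoint D E) : μ E ≠ 1 := by
    rw [measure_mono_null hDE.subset_compl_left (mem_ae_iff.1 hD)]
    exact zero_ne_one
  rcases h with h | h | h
  · exact Or.inl ⟨measure_eq_one_of_ae_mem h, hne h hAB, hne h hAC⟩
  · exact Or.inr (Or.inl ⟨hne h hAB.symm, measure_eq_one_of_ae_mem h, hne h hBC⟩)
  · exact Or.inr (Or.inr ⟨hne h hAC.symm, hne h hBC.symm, measure_eq_one_of_ae_mem h⟩)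

end MeasureFacts

section HeightWalk

variable {α : Type*}

def heightWalk (s : α → ℤ) (ω : ℤ → α) (i : ℤ) : ℤ :=
  if 0 ≤ i then ∑ j ∈ Finset.range i.toNat, s (ω j)
  else -∑ j ∈ Finset.range (-i).toNat, s (ω (i + j))

lemma Hfun_eq_heightWalk (M : ℕ) : Hfun M = heightWalk (dyckSgn M) := rfl

variable {s : α → ℤ} {ω : ℤ → α}

@[simp] lemma heightWalk_zero : heightWalk s ω 0 = 0 := by simp [heightWalk]

lemma heightWalk_natCast (n : ℕ) : heightWalk s ω n = ∑ j ∈ Finset.range n, s (ω j) := by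
  simp [heightWalk]

lemma heightWalk_add_one (i : ℤ) : heightWalk s ω (i + 1) = heightWalk s ω i + s (ω i) := by
  rcases le_or_gt 0 i with hi | hi
  · lift i to ℕ using hi
    rw [show (i : ℤ) + 1 = ((i + 1 : ℕ) : ℤ) by push_cast; rfl, heightWalk_natCast,
      heightWalk_natCast, Finset.sum_range_succ]
  · obtain ⟨n, rfl⟩ : ∃ n : ℕ, i = -(n + 1 : ℕ) := ⟨(-i - 1).toNat, by omega⟩
    have hpos : ¬ (0 : ℤ) ≤ -((n + 1 : ℕ) : ℤ) := by omega
    simp only [heightWalk, if_neg hpos, neg_neg, Int.toNat_natCast, Finset.sum_range_succ']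
    rcases n.eq_zero_or_pos with rfl | hn
    · simp
    · have hpos' : ¬ (0 : ℤ) ≤ -((n + 1 : ℕ) : ℤ) + 1 := by omega
      rw [if_neg hpos', show (-(-((n + 1 : ℕ) : ℤ) + 1)).toNat = n by omega]
      simp only [Nat.cast_add, Nat.cast_one, Nat.cast_zero, add_zero]
      ring_nf

lemma heightWalk_neg (i : ℤ) : heightWalk (-s) ω i = -heightWalk s ω i := by
  unfold heightWalk
  split_ifs <;> simp [Finset.sum_neg_distrib]

lemma neg_eq_one_or_eq_neg_one (hs1 : ∀ a, s a = 1 ∨ s a = -1) (a : α) :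
    (-s) a = 1 ∨ (-s) a = -1 := by
  rcases hs1 a with h | h <;> simp [h]

def shiftBy (k : ℤ) (ω : ℤ → α) : ℤ → α := fun i => ω (i + k)

lemma shiftBy_shiftBy (a b : ℤ) (ω : ℤ → α) : shiftBy a (shiftBy b ω) = shiftBy (a + b) ω := by
  ext i; simp only [shiftBy, add_assoc]

lemma shiftBy_zero (ω : ℤ → α) : shiftBy 0 ω = ω := by ext i; simp [shiftBy]

lemma heightWalk_shiftBy (k i : ℤ) :
    heightWalk s (shiftBy k ω) i = heightWalk s ω (i + k) - heightWalk s ω k := by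
  induction i using Int.induction_on with
  | zero => simp
  | succ i ih =>
    rw [heightWalk_add_one, ih, add_right_comm, heightWalk_add_one]
    simp only [shiftBy]; ring
  | pred i ih =>
    have h1 := heightWalk_add_one (s := s) (ω := shiftBy k ω) (-i - 1)
    have h2 := heightWalk_add_one (s := s) (ω := ω) (-i - 1 + k)
    simp only [sub_add_cancel, shiftBy] at h1 h2
    rw [show -(i : ℤ) - 1 + k + 1 = -i + k by ring] at h2
    linarith

lemma iterate_dyckShift (n : ℕ) (ω : ℤ → α) : dyckShift^[n] ω = shiftBy n ω := by
  induction n with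
  | zero => exact (shiftBy_zero ω).symm
  | succ n ih =>
    rw [Function.iterate_succ_apply', ih]
    exact (shiftBy_shiftBy 1 n ω).trans (by push_cast; rw [add_comm])

end HeightWalk

section ShiftSpace

variable {α : Type*} {s : α → ℤ} {ω : ℤ → α}

def futureAbove (s : α → ℤ) : Set (ℤ → α) :=
  {ω | ∀ j : ℕ, 0 < j → 0 < heightWalk s ω j}

def pastAbove (s : α → ℤ) : Set (ℤ → α) :=
  {ω | ∀ j : ℕ, 0 < j → 0 < heightWalk s ω (-j)}

def futureAboveUpTo (s : α → ℤ) (m : ℕ) : Set (ℤ → α) :=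
  {ω | ∀ j : ℕ, 0 < j → j ≤ m → 0 < heightWalk s ω j}

def pastAboveUpTo (s : α → ℤ) (m : ℕ) : Set (ℤ → α) :=
  {ω | ∀ j : ℕ, 0 < j → j ≤ m → 0 < heightWalk s ω (-j)}

lemma antitone_futureAboveUpTo : Antitone (futureAboveUpTo s) :=
  fun _ _ hmn _ hω j hj hjm => hω j hj (hjm.trans hmn)

lemma antitone_pastAboveUpTo : Antitone (pastAboveUpTo s) :=
  fun _ _ hmn _ hω j hj hjm => hω j hj (hjm.trans hmn)

lemma iInter_futureAboveUpTo : ⋂ m, futureAboveUpTo s m = futureAbove s := by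
  ext ω
  simp only [Set.mem_iInter, futureAboveUpTo, futureAbove, Set.mem_ofPred_eq]
  exact ⟨fun h j hj => h j j hj le_rfl, fun h _ j hj _ => h j hj⟩

lemma iInter_pastAboveUpTo : ⋂ m, pastAboveUpTo s m = pastAbove s := by
  ext ω
  simp only [Set.mem_iInter, pastAboveUpTo, pastAbove, Set.mem_ofPred_eq]
  exact ⟨fun h j hj => h j j hj le_rfl, fun h _ j hj _ => h j hj⟩

lemma shiftBy_mem_futureAbove (k : ℤ) :
    shiftBy k ω ∈ futureAbove s ↔ ∀ j, k < j → heightWalk s ω k < heightWalk s ω j := by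
  simp only [futureAbove, Set.mem_ofPred_eq, heightWalk_shiftBy, sub_pos]
  refine ⟨fun h j hkj => ?_, fun h j hj => h _ (by omega)⟩
  have := h (j - k).toNat (by omega)
  rwa [Int.toNat_of_nonneg (by omega), sub_add_cancel] at this

lemma shiftBy_mem_pastAbove (k : ℤ) :
    shiftBy k ω ∈ pastAbove s ↔ ∀ j, j < k → heightWalk s ω k < heightWalk s ω j := by
  simp only [pastAbove, Set.mem_ofPred_eq, heightWalk_shiftBy, sub_pos]
  refine ⟨fun h j hjk => ?_, fun h j hj => h _ (by omega)⟩
  have := h (k - j).toNat (by omega)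
  rwa [Int.toNat_of_nonneg (by omega), neg_sub, sub_add_cancel] at this

lemma natCast_shiftBy_mem_futureAboveUpTo (i m : ℕ) :
    shiftBy i ω ∈ futureAboveUpTo s m ↔
      ∀ j ∈ Finset.Ioc i (i + m), heightWalk s ω i < heightWalk s ω j := by
  simp only [futureAboveUpTo, Set.mem_ofPred_eq, heightWalk_shiftBy, sub_pos, Finset.mem_Ioc]
  refine ⟨fun h j hj => ?_, fun h j hj hjm => ?_⟩
  · have := h (j - i) (by omega) (by omega)
    rwa [Nat.cast_sub (by omega), sub_add_cancel] at this
  · have := h (j + i) (by omega)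
    rwa [Nat.cast_add] at this

lemma natCast_shiftBy_mem_pastAboveUpTo (k : ℕ) :
    shiftBy k ω ∈ pastAboveUpTo s k ↔ ∀ j < k, heightWalk s ω k < heightWalk s ω j := by
  simp only [pastAboveUpTo, Set.mem_ofPred_eq, heightWalk_shiftBy, sub_pos]
  refine ⟨fun h j hj => ?_, fun h j hj hjk => ?_⟩
  · have := h (k - j) (by omega) (by omega)
    rwa [Nat.cast_sub (by omega), neg_sub, sub_add_cancel] at this
  · rw [neg_add_eq_sub]
    simpa [Nat.cast_sub hjk] using h (k - j) (by omega)

variable (hs1 : ∀ a, s a = 1 ∨ s a = -1)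
include hs1

lemma heightWalk_natCast_unit_steps (ω : ℤ → α) (n : ℕ) :
    heightWalk s ω (n + 1 : ℕ) = heightWalk s ω n + 1 ∨
      heightWalk s ω (n + 1 : ℕ) = heightWalk s ω n - 1 := by
  rw [Nat.cast_succ, heightWalk_add_one]
  rcases hs1 (ω n) with h | h <;> simp [h, sub_eq_add_neg]

lemma heightWalk_neg_natCast_unit_steps (ω : ℤ → α) (n : ℕ) :
    heightWalk s ω (-(n + 1 : ℕ)) = heightWalk s ω (-n) + 1 ∨
      heightWalk s ω (-(n + 1 : ℕ)) = heightWalk s ω (-n) - 1 := by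
  have h := heightWalk_add_one (s := s) (ω := ω) (-(n + 1 : ℕ))
  rw [show -((n + 1 : ℕ) : ℤ) + 1 = -n by push_cast; ring] at h
  rcases hs1 (ω (-(n + 1 : ℕ))) with h' | h' <;> omega

lemma exists_pos_heightWalk_eq_zero {ω : ℤ → α} (hF : ω ∉ futureAbove s)
    (hF' : ω ∉ futureAbove (-s)) : ∃ j : ℕ, 0 < j ∧ heightWalk s ω j = 0 :=
  exists_pos_eq_zero_of_unit_steps (heightWalk_natCast_unit_steps hs1 ω) (by simp) hF
    (by simpa [futureAbove, heightWalk_neg] using hF')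

lemma exists_pos_heightWalk_neg_eq_zero {ω : ℤ → α} (hP : ω ∉ pastAbove s)
    (hP' : ω ∉ pastAbove (-s)) : ∃ j : ℕ, 0 < j ∧ heightWalk s ω (-j) = 0 :=
  exists_pos_eq_zero_of_unit_steps (g := fun n => heightWalk s ω (-n))
    (heightWalk_neg_natCast_unit_steps hs1 ω) (by simp) hP
    (by simpa [pastAbove, heightWalk_neg] using hP')

lemma sum_indicator_futureAboveUpTo_sub_sum_indicator_pastAboveUpTo (ω : ℤ → α) (N : ℕ) :
    ∑ i ∈ Finset.range N,
        (shiftBy (i : ℤ) ⁻¹' futureAboveUpTo s (N - i)).indicator (1 : (ℤ → α) → ℝ) ω -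
      ∑ k ∈ Finset.Icc 1 N,
        (shiftBy (k : ℤ) ⁻¹' pastAboveUpTo s k).indicator (1 : (ℤ → α) → ℝ) ω =
      ∑ i ∈ Finset.range N, (s (ω i) : ℝ) := by
  classical
  set g : ℕ → ℤ := fun n => heightWalk s ω n
  have hF : (Finset.range N).filter
      (fun i : ℕ => ω ∈ shiftBy (i : ℤ) ⁻¹' futureAboveUpTo s (N - i)) = futureMinTimes g N := by
    refine Finset.filter_congr fun i hi => ?_
    rw [Set.mem_preimage, natCast_shiftBy_mem_futureAboveUpTo,
      Nat.add_sub_cancel' (Finset.mem_range.1 hi).le]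
  have hR : (Finset.Icc 1 N).filter (fun k : ℕ => ω ∈ shiftBy (k : ℤ) ⁻¹' pastAboveUpTo s k) =
      recordTimes g N :=
    Finset.filter_congr fun k _ => by rw [Set.mem_preimage, natCast_shiftBy_mem_pastAboveUpTo]
  have hcount := card_futureMinTimes_sub_card_recordTimes (g := g)
    (heightWalk_natCast_unit_steps hs1 ω) N
  rw [show g 0 = 0 by simp [g], show g N = _ from heightWalk_natCast N, sub_zero] at hcount
  rw [Finset.sum_indicator_eq_sum_filter, Finset.sum_indicator_eq_sum_filter, hF, hR]
  simp only [Pi.one_apply, Finset.sum_const, nsmul_eq_mul, mul_one]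
  exact_mod_cast hcount

end ShiftSpace

section ShiftMeasure

variable {α : Type*} [MeasurableSpace α]

lemma measurable_shiftBy (k : ℤ) : Measurable (shiftBy (α := α) k) :=
  measurable_pi_lambda _ fun _ => measurable_pi_apply _

def shiftByEquiv (k : ℤ) : (ℤ → α) ≃ᵐ (ℤ → α) where
  toFun := shiftBy k
  invFun := shiftBy (-k)
  left_inv ω := by simp only [shiftBy_shiftBy, neg_add_cancel, shiftBy_zero]
  right_inv ω := by simp only [shiftBy_shiftBy, add_neg_cancel, shiftBy_zero]
  measurable_toFun := measurable_shiftBy k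
  measurable_invFun := measurable_shiftBy (-k)

lemma iterate_shiftByEquiv_symm (n : ℕ) (ω : ℤ → α) :
    (⇑(shiftByEquiv (α := α) 1).symm)^[n] ω = shiftBy (-n) ω := by
  induction n with
  | zero => exact (shiftBy_zero ω).symm
  | succ n ih =>
    rw [Function.iterate_succ_apply', ih]
    exact (shiftBy_shiftBy (-1) (-n) ω).trans (by push_cast; ring_nf)

variable {ν : Measure (ℤ → α)}

lemma measurePreserving_shiftBy (hν : MeasurePreserving dyckShift ν ν) (k : ℤ) :
    MeasurePreserving (shiftBy k) ν ν := by
  induction k using Int.induction_on with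
  | zero =>
    rw [show shiftBy (0 : ℤ) = (id : (ℤ → α) → ℤ → α) from funext shiftBy_zero]
    exact .id ν
  | succ k ih =>
    have : shiftBy (k + 1) = dyckShift ∘ shiftBy (α := α) k := by
      ext ω : 1
      exact (congrArg (shiftBy · ω) (add_comm _ _)).trans (shiftBy_shiftBy 1 k ω).symm
    exact this ▸ hν.comp ih
  | pred k ih =>
    have : shiftBy (-k - 1) = (shiftByEquiv 1).symm ∘ shiftBy (α := α) (-k) := by
      ext ω : 1
      exact (congrArg (shiftBy · ω) (by ring)).trans (shiftBy_shiftBy (-1) (-k) ω).symm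
    exact this ▸ (hν.symm (shiftByEquiv 1)).comp ih

end ShiftMeasure

section LadderIdentity

variable {α : Type*} [MeasurableSpace α] {s : α → ℤ} {ν : Measure (ℤ → α)}

lemma measurable_heightWalk (hs : Measurable s) (i : ℤ) :
    Measurable fun ω : ℤ → α => heightWalk s ω i := by
  unfold heightWalk
  split_ifs
  · exact Finset.measurable_sum _ fun j _ => hs.comp (measurable_pi_apply _)
  · exact (Finset.measurable_sum _ fun j _ => hs.comp (measurable_pi_apply _)).neg

lemma measurableSet_futureAboveUpTo (hs : Measurable s) (m : ℕ) :
    MeasurableSet (futureAboveUpTo s m) :=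
  measurableSet_setOfPred.2 <| Measurable.forall fun _ => measurable_const.imp <|
    measurable_const.imp <| measurableSet_setOfPred.1 <|
      measurableSet_lt measurable_const (measurable_heightWalk hs _)

lemma measurableSet_pastAboveUpTo (hs : Measurable s) (m : ℕ) :
    MeasurableSet (pastAboveUpTo s m) :=
  measurableSet_setOfPred.2 <| Measurable.forall fun _ => measurable_const.imp <|
    measurable_const.imp <| measurableSet_setOfPred.1 <|
      measurableSet_lt measurable_const (measurable_heightWalk hs _)

lemma measurableSet_futureAbove (hs : Measurable s) : MeasurableSet (futureAbove s) :=
  iInter_futureAboveUpTo (s := s) ▸ .iInter (measurableSet_futureAboveUpTo hs)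

lemma measurableSet_pastAbove (hs : Measurable s) : MeasurableSet (pastAbove s) :=
  iInter_pastAboveUpTo (s := s) ▸ .iInter (measurableSet_pastAboveUpTo hs)

lemma integral_comp_apply_shiftBy (hν : MeasurePreserving dyckShift ν ν) (k : ℤ) :
    ∫ ω, (s (ω k) : ℝ) ∂ν = ∫ ω, (s (ω 0) : ℝ) ∂ν := by
  simpa [shiftByEquiv, shiftBy] using
    (measurePreserving_shiftBy hν k).integral_comp' (f := shiftByEquiv k) fun ω => (s (ω 0) : ℝ)

variable [IsProbabilityMeasure ν] (hν : MeasurePreserving dyckShift ν ν) (hs : Measurable s)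
  (hs1 : ∀ a, s a = 1 ∨ s a = -1)
include hν hs hs1

lemma sum_measureReal_futureAboveUpTo_sub_pastAboveUpTo (N : ℕ) :
    ∑ i ∈ Finset.range N,
        (ν.real (futureAboveUpTo s (i + 1)) - ν.real (pastAboveUpTo s (i + 1))) =
      N * ∫ ω, (s (ω 0) : ℝ) ∂ν := by
  have hF (i m : ℕ) : Integrable
      ((shiftBy (i : ℤ) ⁻¹' futureAboveUpTo s m).indicator (1 : (ℤ → α) → ℝ)) ν :=
    (integrable_const 1).indicator (measurable_shiftBy _ (measurableSet_futureAboveUpTo hs m))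
  have hP (i m : ℕ) : Integrable
      ((shiftBy (i : ℤ) ⁻¹' pastAboveUpTo s m).indicator (1 : (ℤ → α) → ℝ)) ν :=
    (integrable_const 1).indicator (measurable_shiftBy _ (measurableSet_pastAboveUpTo hs m))
  have hstep (i : ℕ) : Integrable (fun ω : ℤ → α => (s (ω i) : ℝ)) ν :=
    .of_bound
      ((measurable_of_countable _).comp (hs.comp (measurable_pi_apply _))).aestronglyMeasurable 1
      (.of_forall fun ω => by rcases hs1 (ω i) with h | h <;> simp [h])
  have key := congrArg (∫ ω, · ω ∂ν)
    (funext (sum_indicator_futureAboveUpTo_sub_sum_indicator_pastAboveUpTo hs1 · N))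
  simp only at key
  rw [integral_sub (integrable_finsetSum _ fun i _ => hF i _)
      (integrable_finsetSum _ fun i _ => hP i _),
    integral_finsetSum _ fun i _ => hF i _, integral_finsetSum _ fun i _ => hP i _,
    integral_finsetSum _ fun i _ => hstep i] at key
  simp only [integral_indicator_one (measurable_shiftBy _ (measurableSet_futureAboveUpTo hs _)),
    integral_indicator_one (measurable_shiftBy _ (measurableSet_pastAboveUpTo hs _)),
    (measurePreserving_shiftBy hν _).measureReal_preimage
      (measurableSet_futureAboveUpTo hs _).nullMeasurableSet,
    (measurePreserving_shiftBy hν _).measureReal_preimage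
      (measurableSet_pastAboveUpTo hs _).nullMeasurableSet,
    integral_comp_apply_shiftBy hν, Finset.sum_const, Finset.card_range, nsmul_eq_mul] at key
  rw [Finset.sum_sub_distrib, ← key]
  congr 1
  · rw [← Finset.sum_range_reflect]
    exact Finset.sum_congr rfl fun i hi => by
      rw [Finset.mem_range] at hi; congr 2; omega
  · rw [← Finset.Ico_add_one_right_eq_Icc, Finset.sum_Ico_eq_sum_range, add_tsub_cancel_right]
    exact Finset.sum_congr rfl fun i _ => by rw [add_comm]

lemma measureReal_futureAboveUpTo_sub_pastAboveUpTo (n : ℕ) :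
    ν.real (futureAboveUpTo s (n + 1)) - ν.real (pastAboveUpTo s (n + 1)) =
      ∫ ω, (s (ω 0) : ℝ) ∂ν := by
  have h := sum_measureReal_futureAboveUpTo_sub_pastAboveUpTo hν hs hs1 (n + 1)
  rw [Finset.sum_range_succ, sum_measureReal_futureAboveUpTo_sub_pastAboveUpTo hν hs hs1 n] at h
  push_cast at h
  linarith

theorem measureReal_futureAbove_sub_pastAbove :
    ν.real (futureAbove s) - ν.real (pastAbove s) = ∫ ω, (s (ω 0) : ℝ) ∂ν := by
  have hlim {t : ℕ → Set (ℤ → α)} (ht : ∀ m, MeasurableSet (t m)) (hanti : Antitone t) :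
      Tendsto (fun m => ν.real (t m)) atTop (𝓝 (ν.real (⋂ m, t m))) :=
    (ENNReal.tendsto_toReal (measure_ne_top _ _)).comp <| tendsto_measure_iInter_atTop
      (fun m => (ht m).nullMeasurableSet) hanti ⟨0, measure_ne_top _ _⟩
  have h := ((hlim (measurableSet_futureAboveUpTo hs) antitone_futureAboveUpTo).sub
    (hlim (measurableSet_pastAboveUpTo hs) antitone_pastAboveUpTo)).comp (tendsto_add_atTop_nat 1)
  rw [iInter_futureAboveUpTo, iInter_pastAboveUpTo] at h
  refine tendsto_nhds_unique h ?_
  simp only [Function.comp_def, measureReal_futureAboveUpTo_sub_pastAboveUpTo hν hs hs1]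
  exact tendsto_const_nhds

end LadderIdentity

section ErgodicWalk

variable {α : Type*} [MeasurableSpace α] {s : α → ℤ} {ν : Measure (ℤ → α)}
  [IsProbabilityMeasure ν]

lemma ae_tendsto_atTop_atTop_of_measure_futureAbove_ne_zero (herg : Ergodic dyckShift ν)
    (hs : Measurable s) (h0 : ν (futureAbove s) ≠ 0) :
    ∀ᵐ ω ∂ν, Tendsto (heightWalk s ω) atTop atTop := by
  filter_upwards [herg.ae_frequently_iterate_mem (measurableSet_futureAbove hs) h0] with ω hω
  simp only [iterate_dyckShift, shiftBy_mem_futureAbove] at hω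
  exact tendsto_atTop_of_frequently_forall_lt
    ((frequently_map.2 hω).filter_mono tendsto_natCast_atTop_atTop)

lemma ae_tendsto_atBot_atTop_of_measure_pastAbove_ne_zero (herg : Ergodic dyckShift ν)
    (hs : Measurable s) (h0 : ν (pastAbove s) ≠ 0) :
    ∀ᵐ ω ∂ν, Tendsto (heightWalk s ω) atBot atTop := by
  have herg' : Ergodic (shiftByEquiv (α := α) 1).symm ν := Ergodic.symm herg
  filter_upwards [herg'.ae_frequently_iterate_mem (measurableSet_pastAbove hs) h0] with ω hω
  simp only [iterate_shiftByEquiv_symm, shiftBy_mem_pastAbove] at hω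
  exact tendsto_atBot_atTop_of_frequently_forall_lt
    (((frequently_map (m := fun n : ℕ => -(n : ℤ))).2 hω).filter_mono
      (tendsto_neg_atTop_atBot.comp tendsto_natCast_atTop_atTop))

theorem not_ae_tendsto_atTop_atTop_and_atBot_atTop (hν : MeasurePreserving dyckShift ν ν)
    (hs : Measurable s) :
    ¬ ∀ᵐ ω ∂ν, Tendsto (heightWalk s ω) atTop atTop ∧ Tendsto (heightWalk s ω) atBot atTop := by
  intro h
  set A : ℤ → Set (ℤ → α) := fun k => {ω | IsLeastArgmin (heightWalk s ω) k}
  have hA (k : ℤ) : A k = shiftBy k ⁻¹' A 0 := by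
    ext ω
    simp only [A, Set.mem_preimage, Set.mem_ofPred_eq, funext (heightWalk_shiftBy (s := s) k),
      isLeastArgmin_comp_add_sub, zero_add]
  have hA0 : MeasurableSet (A 0) :=
    measurableSet_setOfPred.2 <| Measurable.forall fun j =>
      (measurableSet_setOfPred.1 <|
        measurableSet_le (measurable_heightWalk hs 0) (measurable_heightWalk hs j)).and <|
      measurable_const.imp <| measurableSet_setOfPred.1 <|
        measurableSet_lt (measurable_heightWalk hs 0) (measurable_heightWalk hs j)
  have hAm (k : ℤ) : MeasurableSet (A k) := hA k ▸ measurable_shiftBy k hA0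
  refine measure_iUnion_ne_one_of_measure_eq hAm
    (fun k k' hne => Set.disjoint_left.2 fun ω hk hk' => hne (hk.unique hk')) (fun k k' => ?_)
    (measure_eq_one_of_ae_mem (μ := ν) ?_)
  · rw [hA k, hA k', (measurePreserving_shiftBy hν k).measure_preimage hA0.nullMeasurableSet,
      (measurePreserving_shiftBy hν k').measure_preimage hA0.nullMeasurableSet]
  · filter_upwards [h] with ω hω
    exact Set.mem_iUnion.2 (exists_isLeastArgmin hω.1 hω.2)

end ErgodicWalk

section Trichotomy

variable {α : Type*} [MeasurableSpace α] {s : α → ℤ} {ν : Measure (ℤ → α)}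

lemma integral_neg_step : ∫ ω, ((-s) (ω 0) : ℝ) ∂ν = -∫ ω, (s (ω 0) : ℝ) ∂ν := by
  simp only [Pi.neg_apply, Int.cast_neg]; exact integral_neg _

variable [IsProbabilityMeasure ν] (herg : Ergodic dyckShift ν) (hs : Measurable s)
  (hs1 : ∀ a, s a = 1 ∨ s a = -1)
include herg hs hs1

theorem ae_tendsto_of_integral_pos (hc : 0 < ∫ ω, (s (ω 0) : ℝ) ∂ν) :
    ∀ᵐ ω ∂ν, Tendsto (heightWalk s ω) atTop atTop ∧ Tendsto (heightWalk s ω) atBot atBot := by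
  have hid := measureReal_futureAbove_sub_pastAbove herg.toMeasurePreserving hs hs1
  have hid' := measureReal_futureAbove_sub_pastAbove herg.toMeasurePreserving hs.neg
    (neg_eq_one_or_eq_neg_one hs1)
  rw [integral_neg_step] at hid'
  have hF : ν (futureAbove s) ≠ 0 :=
    measure_ne_zero_of_measureReal_pos
      (by linarith [measureReal_nonneg (μ := ν) (s := pastAbove s)])
  have hP : ν (pastAbove (-s)) ≠ 0 :=
    measure_ne_zero_of_measureReal_pos
      (by linarith [measureReal_nonneg (μ := ν) (s := futureAbove (-s))])
  filter_upwards [ae_tendsto_atTop_atTop_of_measure_futureAbove_ne_zero herg hs hF,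
    ae_tendsto_atBot_atTop_of_measure_pastAbove_ne_zero herg hs.neg hP] with ω htop hbot
  rw [show heightWalk (-s) ω = fun i => -heightWalk s ω i from funext heightWalk_neg] at hbot
  exact ⟨htop, tendsto_neg_atTop_iff.1 hbot⟩

theorem measure_futureAbove_eq_zero_and_measure_pastAbove_eq_zero
    (hc : ∫ ω, (s (ω 0) : ℝ) ∂ν = 0) : ν (futureAbove s) = 0 ∧ ν (pastAbove s) = 0 := by
  have hid := measureReal_futureAbove_sub_pastAbove herg.toMeasurePreserving hs hs1
  rw [hc, sub_eq_zero] at hid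
  have hiff : ν (futureAbove s) = 0 ↔ ν (pastAbove s) = 0 := by
    rw [← measureReal_eq_zero_iff, hid, measureReal_eq_zero_iff]
  have hF : ν (futureAbove s) = 0 := by
    by_contra hF
    exact not_ae_tendsto_atTop_atTop_and_atBot_atTop herg.toMeasurePreserving hs
      ((ae_tendsto_atTop_atTop_of_measure_futureAbove_ne_zero herg hs hF).and
        (ae_tendsto_atBot_atTop_of_measure_pastAbove_ne_zero herg hs (mt hiff.2 hF)))
  exact ⟨hF, hiff.1 hF⟩

theorem ae_forall_exists_heightWalk_eq_of_integral_eq_zero (hc : ∫ ω, (s (ω 0) : ℝ) ∂ν = 0) :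
    ∀ᵐ ω ∂ν, ∀ i : ℤ, (∃ j : ℕ, heightWalk s ω (i + (j + 1)) = heightWalk s ω i) ∧
      ∃ j : ℕ, heightWalk s ω (i - (j + 1)) = heightWalk s ω i := by
  obtain ⟨hF, hP⟩ := measure_futureAbove_eq_zero_and_measure_pastAbove_eq_zero herg hs hs1 hc
  obtain ⟨hF', hP'⟩ := measure_futureAbove_eq_zero_and_measure_pastAbove_eq_zero herg hs.neg
    (neg_eq_one_or_eq_neg_one hs1) (by rw [integral_neg_step, hc, neg_zero])
  have hgood : ∀ᵐ ω ∂ν, ω ∉ futureAbove s ∧ ω ∉ futureAbove (-s) ∧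
      ω ∉ pastAbove s ∧ ω ∉ pastAbove (-s) := by
    filter_upwards [measure_eq_zero_iff_ae_notMem.1 hF, measure_eq_zero_iff_ae_notMem.1 hF',
      measure_eq_zero_iff_ae_notMem.1 hP, measure_eq_zero_iff_ae_notMem.1 hP'] with ω h1 h2 h3 h4
    exact ⟨h1, h2, h3, h4⟩
  filter_upwards [ae_all_iff.2 fun k : ℤ =>
    (measurePreserving_shiftBy herg.toMeasurePreserving k).quasiMeasurePreserving.ae hgood]
    with ω hω i
  obtain ⟨hF, hF', hP, hP'⟩ := hω i
  obtain ⟨n, hn, hfut⟩ := exists_pos_heightWalk_eq_zero hs1 hF hF'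
  obtain ⟨m, hm, hpast⟩ := exists_pos_heightWalk_neg_eq_zero hs1 hP hP'
  rw [heightWalk_shiftBy, sub_eq_zero] at hfut hpast
  refine ⟨⟨n - 1, ?_⟩, ⟨m - 1, ?_⟩⟩
  · rwa [Nat.cast_sub hn, Nat.cast_one, sub_add_cancel, add_comm]
  · rwa [Nat.cast_sub hm, Nat.cast_one, sub_add_cancel, sub_eq_neg_add]

theorem ae_trichotomy_heightWalk :
    (∀ᵐ ω ∂ν, ∀ i : ℤ, (∃ j : ℕ, heightWalk s ω (i + (j + 1)) = heightWalk s ω i) ∧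
      ∃ j : ℕ, heightWalk s ω (i - (j + 1)) = heightWalk s ω i) ∨
    (∀ᵐ ω ∂ν, Tendsto (heightWalk s ω) atTop atTop ∧ Tendsto (heightWalk s ω) atBot atBot) ∨
    (∀ᵐ ω ∂ν, Tendsto (heightWalk s ω) atTop atBot ∧ Tendsto (heightWalk s ω) atBot atTop) := by
  rcases lt_trichotomy (∫ ω, (s (ω 0) : ℝ) ∂ν) 0 with hc | hc | hc
  · refine Or.inr (Or.inr ?_)
    filter_upwards [ae_tendsto_of_integral_pos herg hs.neg (neg_eq_one_or_eq_neg_one hs1)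
      (by rw [integral_neg_step]; linarith)] with ω hω
    rw [show heightWalk (-s) ω = fun i => -heightWalk s ω i from funext heightWalk_neg] at hω
    exact ⟨tendsto_neg_atTop_iff.1 hω.1, tendsto_neg_atBot_iff.1 hω.2⟩
  · exact Or.inl (ae_forall_exists_heightWalk_eq_of_integral_eq_zero herg hs hs1 hc)
  · exact Or.inr (Or.inl (ae_tendsto_of_integral_pos herg hs hs1 hc))

end Trichotomy

section Dyck

variable {M : ℕ}

lemma measurable_dyckSgn : Measurable (dyckSgn M) := by
  have : dyckSgn M = Sum.elim (fun _ => 1) (fun _ => -1) := by funext a; cases a <;> rfl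
  exact this ▸ measurable_const.sumElim measurable_const

lemma dyckSgn_eq_one_or_eq_neg_one (a : DyckAlphabet M) : dyckSgn M a = 1 ∨ dyckSgn M a = -1 := by
  cases a <;> simp [dyckSgn]

lemma mem_Azero_iff {ω : ℤ → DyckAlphabet M} :
    ω ∈ Azero M ↔ ∀ i : ℤ, (∃ j : ℕ, Hfun M ω (i + (j + 1)) = Hfun M ω i) ∧
      ∃ j : ℕ, Hfun M ω (i - (j + 1)) = Hfun M ω i := by
  simp only [Azero, Set.mem_iInter, Set.mem_inter_iff, Set.mem_iUnion, Set.mem_ofPred_eq]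

lemma not_eventually_ne_Hfun_of_mem_Azero {ω : ℤ → DyckAlphabet M} (hω : ω ∈ Azero M) :
    ¬ ∀ᶠ j in atTop, Hfun M ω j ≠ Hfun M ω 0 :=
  not_eventually_ne_of_forall_exists_gt_eq fun i => by
    obtain ⟨j, hj⟩ := (mem_Azero_iff.1 hω i).1
    exact ⟨_, by omega, hj⟩

lemma disjoint_Azero_Aalpha : Disjoint (Azero M) (Aalpha M) :=
  Set.disjoint_left.2 fun _ hz ha => not_eventually_ne_Hfun_of_mem_Azero hz <|
    (ha.1.eventually_gt_atTop _).mono fun _ h => h.ne'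

lemma disjoint_Azero_Abeta : Disjoint (Azero M) (Abeta M) :=
  Set.disjoint_left.2 fun _ hz hb => not_eventually_ne_Hfun_of_mem_Azero hz <|
    (hb.1.eventually_lt_atBot _).mono fun _ h => h.ne

lemma disjoint_Aalpha_Abeta : Disjoint (Aalpha M) (Abeta M) :=
  Set.disjoint_left.2 fun _ ha hb => ha.1.not_tendsto disjoint_atTop_atBot hb.1

end Dyck

theorem ergodic_trichotomy_dyck_general (M : ℕ)
    (ν : Measure (ℤ → DyckAlphabet M)) [IsProbabilityMeasure ν]
    (herg : Ergodic (dyckShift (α := DyckAlphabet M)) ν) :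
    (ν (Azero M) = 1 ∧ ν (Aalpha M) ≠ 1 ∧ ν (Abeta M) ≠ 1) ∨
    (ν (Azero M) ≠ 1 ∧ ν (Aalpha M) = 1 ∧ ν (Abeta M) ≠ 1) ∨
    (ν (Azero M) ≠ 1 ∧ ν (Aalpha M) ≠ 1 ∧ ν (Abeta M) = 1) := by
  have h := ae_trichotomy_heightWalk herg measurable_dyckSgn dyckSgn_eq_one_or_eq_neg_one
  rw [← Hfun_eq_heightWalk] at h
  exact measure_trichotomy_of_ae disjoint_Azero_Aalpha disjoint_Azero_Abeta disjoint_Aalpha_Abeta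
    (h.imp (fun h => h.mono fun _ => mem_Azero_iff.2) id)

/-- any ergodic shift-invariant Borel probability measure on the two-sided
Dyck shift gives full measure to exactly one of `A_0`, `A_α`, `A_β`. -/
theorem ergodic_trichotomy_dyck (M : ℕ) (hM : 2 ≤ M)
    (ν : Measure (ℤ → DyckAlphabet M)) [IsProbabilityMeasure ν]
    (herg : Ergodic (dyckShift (α := DyckAlphabet M)) ν)
    (hD : ν (SigmaD M) = 1) :
    (ν (Azero M) = 1 ∧ ν (Aalpha M) ≠ 1 ∧ ν (Abeta M) ≠ 1) ∨
    (ν (Azero M) ≠ 1 ∧ ν (Aalpha M) = 1 ∧ ν (Abeta M) ≠ 1) ∨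
    (ν (Azero M) ≠ 1 ∧ ν (Aalpha M) ≠ 1 ∧ ν (Abeta M) = 1) :=
  ergodic_trichotomy_dyck_general M ν herg
end

section
/- The map ψ_α, defined on φ_α(B_α) by reconstructing the closing bracket index via the matching time s_α(i,ζ) = max{j < i+1 : H_{α,j}(ζ) = H_{α,i+1}(ζ)}, is a continuous inverse of φ_α : B_α → φ_α(B_α); in particular φ_α is a homeomorphism of B_α onto its image, and φ_α ∘ σ|_{B_α} = σ_α ∘ φ_α. -/
open Filter

/-- The alphabet `{α_1, …, α_M, β}` of the full shift `Σ_α`. -/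
abbrev AlphaAlphabet (M : ℕ) := Fin M ⊕ Unit

/-- `B_α ⊂ Σ_D`: sequences in which every right bracket is matched (closed) on the left. -/
def Balpha (M : ℕ) : Set (ℤ → DyckAlphabet M) :=
  SigmaD M ∩
    ⋂ i : ℤ, ⋃ k : Fin M,
      ({ω | ω i = Sum.inl k} ∪
        ({ω | ω i = Sum.inr k} ∩ ⋃ j : ℕ, {ω | Hfun M ω (i - j) = Hfun M ω (i + 1)}))

/-- `φ_α : B_α → Σ_α`, replacing each `β_k` by the single symbol `β`. -/
def phiAlpha (M : ℕ) (ω : ℤ → DyckAlphabet M) : ℤ → AlphaAlphabet M := fun i =>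
  match ω i with
  | Sum.inl k => Sum.inl k
  | Sum.inr _ => Sum.inr ()

/-- `+1` on `α_k`, `-1` on `β`. -/
def alphaSgn (M : ℕ) : AlphaAlphabet M → ℤ
  | Sum.inl _ => 1
  | Sum.inr _ => -1

/-- The height functions `H_{α,i}` on `Σ_α`. -/
def HfunAlpha (M : ℕ) (ζ : ℤ → AlphaAlphabet M) (i : ℤ) : ℤ :=
  if 0 ≤ i then ∑ j ∈ Finset.range i.toNat, alphaSgn M (ζ j)
  else -∑ j ∈ Finset.range (-i).toNat, alphaSgn M (ζ (i + j))

-- The matching time `s_α(i,ζ) = max {j < i+1 : H_{α,j}(ζ) = H_{α,i+1}(ζ)}`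
-- (junk value `0` if no greatest such `j` exists).
open Classical in
noncomputable def sAlpha (M : ℕ) (ζ : ℤ → AlphaAlphabet M) (i : ℤ) : ℤ :=
  if h : ∃ j, (j < i + 1 ∧ HfunAlpha M ζ j = HfunAlpha M ζ (i + 1)) ∧
      ∀ j', j' < i + 1 → HfunAlpha M ζ j' = HfunAlpha M ζ (i + 1) → j' ≤ j
  then h.choose else 0

/-- `ψ_α`, reconstructing the index of each closing bracket from the matching time. -/
noncomputable def psiAlpha (M : ℕ) [NeZero M] (ζ : ℤ → AlphaAlphabet M) :
    ℤ → DyckAlphabet M := fun i =>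
  match ζ i with
  | Sum.inl k => Sum.inl k
  | Sum.inr _ =>
    match ζ (sAlpha M ζ i) with
    | Sum.inl k => Sum.inr k
    | Sum.inr _ => Sum.inr 0

/-!
Read `φ_α ω` as a walk of heights. For `ω ∈ B_α` and a right bracket `ω i = β_k`, let `s` be the
last time `≤ i` at which the height is at most `H_{i+1}`. Then the height stays strictly above
`H_{i+1} = H_s` on `(s, i]`, so `ω s` is a left bracket, `s` is the matching time
`s_α(i, φ_α ω)`, and running the Dyck stack machine over `ω_s … ω_i` shows that `ω s = α_k`.
Since this characterisation of `s` only involves the height increments on `[s, i]`,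
`s_α(i, ζ) = s` for every `ζ` agreeing with `φ_α ω` on `[s, i]`: every coordinate of `ψ_α` is
locally constant near `φ_α ω`, with value `ω i`.
This gives at once `ψ_α ∘ φ_α = id` on `B_α` and the continuity of `ψ_α` on `φ_α(B_α)`.
-/

open Topology

section SignedHeight

variable {X : Type*}

/-- `Hfun M` and `HfunAlpha M` are `signedHeight (dyckSgn M)` and `signedHeight (alphaSgn M)`
by `rfl`. -/
def signedHeight (g : X → ℤ) (x : ℤ → X) (i : ℤ) : ℤ :=
  if 0 ≤ i then ∑ j ∈ Finset.range i.toNat, g (x j)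
  else -∑ j ∈ Finset.range (-i).toNat, g (x (i + j))

theorem signedHeight_neg_natCast (g : X → ℤ) (x : ℤ → X) (n : ℕ) :
    signedHeight g x (-n) = -∑ j ∈ Finset.range n, g (x (-n + j)) := by
  rcases n with _ | n
  · simp [signedHeight]
  · rw [signedHeight, if_neg (by omega)]
    simp

theorem signedHeight_succ (g : X → ℤ) (x : ℤ → X) (i : ℤ) :
    signedHeight g x (i + 1) = signedHeight g x i + g (x i) := by
  rcases le_or_gt 0 i with hi | hi
  · lift i to ℕ using hi
    simp only [signedHeight, Nat.cast_nonneg, if_true, ← Nat.cast_succ, Int.toNat_natCast,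
      Finset.sum_range_succ]
  · obtain ⟨n, rfl⟩ : ∃ n : ℕ, i = -(n + 1 : ℕ) := ⟨(-i - 1).toNat, by omega⟩
    rw [show -((n + 1 : ℕ) : ℤ) + 1 = -n by push_cast; ring, signedHeight_neg_natCast,
      signedHeight_neg_natCast, Finset.sum_range_succ']
    have hshift : ∀ j : ℕ, -((n + 1 : ℕ) : ℤ) + (j + 1 : ℕ) = -n + j := fun j => by
      push_cast; ring
    simp only [hshift, Nat.cast_zero, add_zero]
    ring

theorem signedHeight_sub_congr {Y : Type*} {g : X → ℤ} {g' : Y → ℤ} {x : ℤ → X} {y : ℤ → Y}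
    {a b : ℤ} (hab : a ≤ b) (h : ∀ t, a ≤ t → t < b → g (x t) = g' (y t)) :
    signedHeight g x b - signedHeight g x a = signedHeight g' y b - signedHeight g' y a := by
  induction b, hab using Int.leInduction with
  | base => simp
  | succ b hab ih =>
    have := ih fun t ht htb => h t ht (by omega)
    rw [signedHeight_succ, signedHeight_succ, h b hab (by omega)]
    omega

def matchTimes (g : X → ℤ) (x : ℤ → X) (i : ℤ) : Set ℤ :=
  {j | j < i + 1 ∧ signedHeight g x j = signedHeight g x (i + 1)}

theorem IsGreatest.matchTimes_congr {Y : Type*} {g : X → ℤ} {g' : Y → ℤ} {x : ℤ → X}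
    {y : ℤ → Y} {i s : ℤ} (h : IsGreatest (matchTimes g x i) s)
    (hxy : ∀ t, s ≤ t → t ≤ i → g (x t) = g' (y t)) :
    IsGreatest (matchTimes g' y i) s := by
  have hsub : ∀ j, s ≤ j → j ≤ i + 1 → signedHeight g x (i + 1) - signedHeight g x j =
      signedHeight g' y (i + 1) - signedHeight g' y j := fun j hsj hji =>
    signedHeight_sub_congr hji fun t hjt hti => hxy t (by omega) (by omega)
  obtain ⟨⟨hsi, hsH⟩, hs_max⟩ := h
  refine ⟨⟨hsi, by have := hsub s le_rfl hsi.le; omega⟩, fun j ⟨hji, hjH⟩ => ?_⟩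
  by_contra! hsj
  have := hsub j hsj.le hji.le
  exact absurd (hs_max ⟨hji, by omega⟩) (not_le.2 hsj)

end SignedHeight

section Dyck

variable {M : ℕ}

theorem Hfun_succ (ω : ℤ → DyckAlphabet M) (i : ℤ) :
    Hfun M ω (i + 1) = Hfun M ω i + dyckSgn M (ω i) :=
  signedHeight_succ _ _ _

theorem dyckWord_zero (ω : ℤ → DyckAlphabet M) (j : ℤ) : dyckWord M ω j 0 = [] := rfl

theorem dyckWord_succ (ω : ℤ → DyckAlphabet M) (j : ℤ) (n : ℕ) :
    dyckWord M ω j (n + 1) = ω j :: dyckWord M ω (j + 1) n := by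
  simp [dyckWord, List.range_succ_eq_map, List.flatMap_map, List.map_flatMap, add_assoc,
    add_comm (1 : ℤ)]

/-- Reading a window along which the height never falls more than `st₀.length` below its
starting value leaves the bottom `st` of the stack untouched. -/
theorem dyckValid_dyckWord_add {ω : ℤ → DyckAlphabet M} {j : ℤ} {n r : ℕ}
    {st₀ st : List (Fin M)} (hpos : ∀ m ≤ n, Hfun M ω j ≤ Hfun M ω (j + m) + st₀.length)
    (h : dyckValid M (dyckWord M ω j (n + r)) (st₀ ++ st) = true) :
    ∃ st₁ : List (Fin M), (st₁.length : ℤ) + Hfun M ω j = Hfun M ω (j + n) + st₀.length ∧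
      dyckValid M (dyckWord M ω (j + n) r) (st₁ ++ st) = true := by
  induction n generalizing j st₀ with
  | zero => exact ⟨st₀, by simp [add_comm], by simpa using h⟩
  | succ n ih =>
    have hshift : ∀ m : ℕ, j + (m + 1 : ℕ) = j + 1 + m := fun m => by push_cast; ring
    have hpos' : ∀ m ≤ n, Hfun M ω j ≤ Hfun M ω (j + 1 + m) + st₀.length := fun m hm => by
      simpa only [hshift] using hpos (m + 1) (by omega)
    have hstep := Hfun_succ ω j
    rw [show n + 1 + r = n + r + 1 by omega, dyckWord_succ] at h
    rw [hshift]
    rcases hj : ω j with a | b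
    · rw [hj] at h hstep
      simp only [dyckSgn] at hstep
      obtain ⟨st₁, hlen, hst₁⟩ := ih (st₀ := a :: st₀) (fun m hm => by
        have := hpos' m hm; simp only [List.length_cons]; omega) h
      refine ⟨st₁, ?_, hst₁⟩
      simp only [List.length_cons] at hlen
      omega
    · rw [hj] at h hstep
      simp only [dyckSgn] at hstep
      cases st₀ with
      | nil =>
        have := hpos 1 (by omega)
        simp only [Nat.cast_one, List.length_nil, Nat.cast_zero, add_zero] at this
        omega
      | cons c st₀ =>
        simp only [List.cons_append, dyckValid, Bool.if_false_right, Bool.and_eq_true,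
          decide_eq_true_eq] at h
        obtain ⟨st₁, hlen, hst₁⟩ := ih (st₀ := st₀) (fun m hm => by
          have := hpos' m hm; simp only [List.length_cons] at this; omega) h.2
        refine ⟨st₁, ?_, hst₁⟩
        simp only [List.length_cons]
        omega

theorem bracket_eq_of_mem_SigmaD {ω : ℤ → DyckAlphabet M} (hω : ω ∈ SigmaD M) {s i : ℤ}
    {a b : Fin M} (hs : ω s = Sum.inl a) (hi : ω i = Sum.inr b) (hsi : s < i)
    (habove : ∀ t, s < t → t ≤ i → Hfun M ω s < Hfun M ω t)
    (hH : Hfun M ω (i + 1) = Hfun M ω s) : a = b := by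
  obtain ⟨n, rfl⟩ : ∃ n : ℕ, i = s + 1 + n := ⟨(i - s - 1).toNat, by omega⟩
  have hvalid := hω s (n + 1 + 1)
  rw [dyckWord_succ, hs] at hvalid
  have hs1 : Hfun M ω (s + 1) = Hfun M ω s + 1 := by rw [Hfun_succ, hs]; rfl
  have hi1 : Hfun M ω (s + 1 + n + 1) = Hfun M ω (s + 1 + n) - 1 := by
    rw [Hfun_succ, hi]; rfl
  obtain ⟨st₁, hlen, hst₁⟩ := dyckValid_dyckWord_add (st₀ := []) (st := [a])
    (fun m hm => by
      have := habove (s + 1 + m) (by omega) (by omega)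
      simp only [List.length_nil, Nat.cast_zero, add_zero]
      omega) hvalid
  obtain rfl : st₁ = [] := List.eq_nil_of_length_eq_zero <| by
    simp only [List.length_nil, Nat.cast_zero, add_zero] at hlen; omega
  simpa [dyckWord_succ, dyckWord_zero, hi, dyckValid] using hst₁

theorem exists_matching_of_mem_Balpha {ω : ℤ → DyckAlphabet M} (hω : ω ∈ Balpha M) {i : ℤ}
    {k : Fin M} (hi : ω i = Sum.inr k) :
    ∃ s < i, ω s = Sum.inl k ∧ IsGreatest (matchTimes (dyckSgn M) ω i) s := by
  obtain ⟨hD, hB⟩ := hω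
  obtain ⟨k', hk'⟩ := Set.mem_iInter.1 hB i |> Set.mem_iUnion.1
  obtain ⟨-, j, hj⟩ : ω i = Sum.inr k' ∧ ∃ j : ℕ, Hfun M ω (i - j) = Hfun M ω (i + 1) := by
    simpa [hi] using hk'
  have hi1 : Hfun M ω (i + 1) = Hfun M ω i - 1 := by rw [Hfun_succ, hi]; rfl
  obtain ⟨s, ⟨hsi, hsH⟩, hs_max⟩ := Int.exists_greatest_of_bdd
    (P := fun t => t ≤ i ∧ Hfun M ω t ≤ Hfun M ω (i + 1))
    ⟨i, fun _ ht => ht.1⟩ ⟨i - j, by omega, hj.le⟩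
  have habove : ∀ t, s < t → t ≤ i → Hfun M ω (i + 1) < Hfun M ω t := fun t hst hti => by
    by_contra! hle
    exact absurd (hs_max t ⟨hti, hle⟩) (by omega)
  have hsi : s < i := lt_of_le_of_ne hsi fun h => by subst h; omega
  have hs1 := habove (s + 1) (by omega) (by omega)
  rw [Hfun_succ ω s] at hs1
  obtain ⟨a, ha⟩ : ∃ a, ω s = Sum.inl a := by
    rcases hωs : ω s with a | a
    · exact ⟨a, rfl⟩
    · rw [hωs] at hs1; simp only [dyckSgn] at hs1; omega
  have hsH : Hfun M ω s = Hfun M ω (i + 1) := by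
    rw [ha] at hs1; simp only [dyckSgn] at hs1; omega
  refine ⟨s, hsi, ?_, ⟨⟨by omega, hsH⟩, fun t ⟨ht, htH⟩ => hs_max t ⟨by omega, htH.le⟩⟩⟩
  rw [ha, bracket_eq_of_mem_SigmaD hD ha hi hsi (fun t hst hti => hsH ▸ habove t hst hti)
    hsH.symm]

end Dyck

section Alpha

variable {M : ℕ}

theorem sAlpha_eq_of_isGreatest {ζ : ℤ → AlphaAlphabet M} {i s : ℤ}
    (h : IsGreatest (matchTimes (alphaSgn M) ζ i) s) : sAlpha M ζ i = s := by
  have hex : ∃ j, (j < i + 1 ∧ HfunAlpha M ζ j = HfunAlpha M ζ (i + 1)) ∧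
      ∀ j', j' < i + 1 → HfunAlpha M ζ j' = HfunAlpha M ζ (i + 1) → j' ≤ j :=
    ⟨s, h.1, fun j hj hjH => h.2 ⟨hj, hjH⟩⟩
  rw [sAlpha, dif_pos hex]
  exact (h.unique ⟨hex.choose_spec.1, fun j hj => hex.choose_spec.2 j hj.1 hj.2⟩).symm

theorem alphaSgn_phiAlpha (ω : ℤ → DyckAlphabet M) (t : ℤ) :
    alphaSgn M (phiAlpha M ω t) = dyckSgn M (ω t) := by
  rcases h : ω t with k | k <;> simp [phiAlpha, alphaSgn, dyckSgn, h]

theorem phiAlpha_eq_comp (ω : ℤ → DyckAlphabet M) :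
    phiAlpha M ω = Sum.map id (fun _ => ()) ∘ ω := by
  funext i
  rcases h : ω i with k | k <;> simp [phiAlpha, h]

theorem continuous_phiAlpha : Continuous (phiAlpha M) := by
  rw [funext phiAlpha_eq_comp]
  exact continuous_pi fun i => continuous_of_discreteTopology.comp (continuous_apply i)

theorem eventually_forall_mem_eq_nhds {ι α : Type*} [TopologicalSpace α] [DiscreteTopology α]
    {S : Set ι} (hS : S.Finite) (x : ι → α) : ∀ᶠ y in 𝓝 x, ∀ t ∈ S, y t = x t :=
  set_pi_mem_nhds (s := fun t => {x t}) hS fun _ _ => (isOpen_discrete _).mem_nhds rfl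

theorem psiAlpha_apply_eventuallyEq [NeZero M] {ω : ℤ → DyckAlphabet M} (hω : ω ∈ Balpha M)
    (i : ℤ) : (fun ζ => psiAlpha M ζ i) =ᶠ[𝓝 (phiAlpha M ω)] fun _ => ω i := by
  rcases hωi : ω i with k | k
  · filter_upwards [eventually_forall_mem_eq_nhds (Set.finite_singleton i) (phiAlpha M ω)]
      with ζ hζ
    simp [psiAlpha, hζ i rfl, phiAlpha, hωi]
  · obtain ⟨s, hsi, hωs, hs⟩ := exists_matching_of_mem_Balpha hω hωi
    filter_upwards [eventually_forall_mem_eq_nhds (Set.finite_Icc s i) (phiAlpha M ω)]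
      with ζ hζ
    have hsζ : sAlpha M ζ i = s := sAlpha_eq_of_isGreatest <| hs.matchTimes_congr
      fun t hst hti => by rw [hζ t ⟨hst, hti⟩, alphaSgn_phiAlpha]
    simp [psiAlpha, hζ i ⟨hsi.le, le_rfl⟩, hsζ, hζ s ⟨le_rfl, hsi.le⟩, phiAlpha, hωi, hωs]

theorem leftInvOn_psiAlpha_phiAlpha [NeZero M] :
    Set.LeftInvOn (psiAlpha M) (phiAlpha M) (Balpha M) := fun _ hω =>
  funext fun i => (psiAlpha_apply_eventuallyEq hω i).self_of_nhds

theorem continuousOn_psiAlpha [NeZero M] :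
    ContinuousOn (psiAlpha M) (phiAlpha M '' Balpha M) := by
  rintro _ ⟨ω, hω, rfl⟩
  exact (continuousAt_pi.2 fun i =>
    (psiAlpha_apply_eventuallyEq hω i).continuousAt).continuousWithinAt

end Alpha

theorem exists_homeomorph_image_of_leftInvOn {X Y : Type*} [TopologicalSpace X]
    [TopologicalSpace Y] {f : X → Y} {g : Y → X} {s : Set X} (hf : ContinuousOn f s)
    (hg : ContinuousOn g (f '' s)) (hgf : Set.LeftInvOn g f s) :
    ∃ h : s ≃ₜ f '' s, ∀ x : s, (h x : Y) = f x := by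
  have hg_mem : Set.MapsTo g (f '' s) s := by
    rintro _ ⟨x, hx, rfl⟩
    rwa [hgf hx]
  exact ⟨{ toFun := fun x => ⟨f x, Set.mem_image_of_mem f x.2⟩
           invFun := fun y => ⟨g y, hg_mem y.2⟩
           left_inv := fun x => Subtype.ext (hgf x.2)
           right_inv := fun y => Subtype.ext (hgf.rightInvOn_image y.2)
           continuous_toFun := hf.domRestrict.subtype_mk _
           continuous_invFun := hg.domRestrict.subtype_mk _ }, fun _ => rfl⟩

/-- `ψ_α` is a continuous inverse of `φ_α : B_α → φ_α(B_α)`; in particular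
`φ_α` is a homeomorphism of `B_α` onto its image, and `φ_α ∘ σ = σ_α ∘ φ_α` on `B_α`. -/
theorem phiAlpha_homeomorph (M : ℕ) (hM : 2 ≤ M) :
    haveI : NeZero M := ⟨by omega⟩
    Continuous (phiAlpha M) ∧
    ContinuousOn (psiAlpha M) (phiAlpha M '' Balpha M) ∧
    (∀ ω ∈ Balpha M, psiAlpha M (phiAlpha M ω) = ω) ∧
    (∀ ζ ∈ phiAlpha M '' Balpha M, phiAlpha M (psiAlpha M ζ) = ζ) ∧
    (∃ h : Balpha M ≃ₜ (phiAlpha M '' Balpha M),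
      ∀ ω : Balpha M, (h ω : ℤ → AlphaAlphabet M) = phiAlpha M ω) ∧
    (∀ ω ∈ Balpha M, phiAlpha M (dyckShift ω) = dyckShift (phiAlpha M ω)) := by
  have : NeZero M := ⟨by omega⟩
  exact ⟨continuous_phiAlpha, continuousOn_psiAlpha, leftInvOn_psiAlpha_phiAlpha,
    leftInvOn_psiAlpha_phiAlpha.rightInvOn_image,
    exists_homeomorph_image_of_leftInvOn continuous_phiAlpha.continuousOn continuousOn_psiAlpha
      leftInvOn_psiAlpha_phiAlpha,
    fun _ _ => rfl⟩
end

section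
/- If the weak mixing of a measure-preserving system (F, Leb) on [0,1]^d holds (d = 2 or 3) and the phase space has Euclidean diameter √d, then Lebesgue-almost every pair of points (x,y) ∈ [0,1]^d × [0,1]^d is a Li–Yorke pair: liminf_n dist(F^n x, F^n y) = 0 and limsup_n dist(F^n x, F^n y) = √d. -/
/-!
The product map `F × F` is ergodic, so almost every orbit of a pair accumulates at every point
of the support of `μ ⊗ μ`, which is the whole of `K × K` for the unit cube `K`. This support
contains the diagonal point `(0, 0)` and the pair of opposite corners `(0, 𝟙)`, at distance `√d`;
by continuity of `dist`, the distances `dist (Fⁿ x) (Fⁿ y)` accumulate at `0` and at `√d`, and a.e.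
they stay in `[0, √d]` because the orbit stays in `K × K`. The diagonal is null since Lebesgue
measure has no atoms.
-/

open MeasureTheory Filter Set Topology TopologicalSpace

namespace Ergodic

variable {α : Type*} [MeasurableSpace α] {T : α → α} {ν : Measure α} [IsFiniteMeasure ν]

theorem ae_frequently_mem (hT : Ergodic T ν) {s : Set α} (hs : NullMeasurableSet s ν)
    (h0 : ν s ≠ 0) : ∀ᵐ x ∂ν, ∃ᶠ n in atTop, T^[n] x ∈ s := by
  -- The points whose orbit meets `s` form a backward invariant set containing `s`, hence a conull
  -- one; Poincaré recurrence turns one visit into infinitely many.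
  set V := ⋃ n, T^[n] ⁻¹' s
  have hV_inv : T ⁻¹' V ⊆ V := by
    rintro x ⟨_, ⟨n, rfl⟩, hn⟩
    exact mem_iUnion.2 ⟨n + 1, hn⟩
  have hV : ∀ᵐ x ∂ν, x ∈ V := by
    refine mem_ae_iff.2 <| ae_eq_univ.1 <| (hT.ae_empty_or_univ_of_preimage_ae_le
      (.iUnion fun n => hs.preimage (hT.quasiMeasurePreserving.iterate n))
      hV_inv.eventuallyLE).resolve_left fun hV_null => h0 ?_
    exact measure_mono_null (subset_iUnion_of_subset 0 subset_rfl) (ae_eq_empty.1 hV_null)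
  filter_upwards [hV,
    hT.toMeasurePreserving.conservative.ae_forall_image_mem_imp_frequently_image_mem hs]
    with x ⟨_, ⟨n, rfl⟩, hn⟩ hrec using hrec n hn

theorem ae_mapClusterPt_of_mem_support [TopologicalSpace α] [SecondCountableTopology α]
    [OpensMeasurableSpace α] (hT : Ergodic T ν) :
    ∀ᵐ x ∂ν, ∀ y ∈ ν.support, MapClusterPt y atTop (fun n => T^[n] x) := by
  have hbasis : ∀ o ∈ {o ∈ countableBasis α | ν o ≠ 0}, ∀ᵐ x ∂ν, ∃ᶠ n in atTop, T^[n] x ∈ o :=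
    fun o ho => hT.ae_frequently_mem (isOpen_of_mem_countableBasis ho.1).nullMeasurableSet ho.2
  filter_upwards [(ae_ball_iff ((countable_countableBasis α).mono (sep_subset _ _))).2 hbasis]
    with x hx y hy
  refine mapClusterPt_iff_frequently.2 fun s hs => ?_
  obtain ⟨o, hob, hyo, hos⟩ := (isBasis_countableBasis α).mem_nhds_iff.1 hs
  have hνo : ν o ≠ 0 := ((Measure.mem_support_iff_forall y).1 hy o
    ((isOpen_of_mem_countableBasis hob).mem_nhds hyo)).ne'
  exact (hx o ⟨hob, hνo⟩).mono fun n hn => hos hn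

end Ergodic

theorem Ergodic.ae_mapClusterPt_dist_of_mem_support {X : Type*} [PseudoMetricSpace X]
    [SecondCountableTopology X] [MeasurableSpace X] [OpensMeasurableSpace X] {F : X → X}
    {ν : Measure (X × X)} [IsFiniteMeasure ν] (hF : Ergodic (Prod.map F F) ν) :
    ∀ᵐ p ∂ν, ∀ q ∈ ν.support,
      MapClusterPt (dist q.1 q.2) atTop (fun n => dist (F^[n] p.1) (F^[n] p.2)) := by
  filter_upwards [hF.ae_mapClusterPt_of_mem_support] with p hp q hq
  simpa only [Function.comp_def, Prod.map_iterate, Prod.map_fst, Prod.map_snd] using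
    (hp q hq).continuousAt_comp continuous_dist.continuousAt

theorem MeasureTheory.MeasurePreserving.ae_forall_iterate_mem {α : Type*} [MeasurableSpace α]
    {T : α → α} {ν : Measure α} (hT : MeasurePreserving T ν ν) {s : Set α}
    (hs : ∀ᵐ x ∂ν, x ∈ s) : ∀ᵐ x ∂ν, ∀ n, T^[n] x ∈ s :=
  ae_all_iff.2 fun n => (hT.iterate n).quasiMeasurePreserving.ae hs

namespace MeasureTheory.Measure

theorem ae_prod_fst_ne_snd {X : Type*} [MeasurableSpace X] [MeasurableEq X]
    (μ ν : Measure X) [SFinite ν] [NullSingletonClass ν] : ∀ᵐ p ∂μ.prod ν, p.1 ≠ p.2 :=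
  (ae_prod_iff_ae_ae measurableSet_diagonal.compl).2 <|
    ae_of_all _ fun x => (ν.ae_ne x).mono fun _ => Ne.symm

theorem closure_interior_subset_support_restrict {X : Type*} [TopologicalSpace X]
    [MeasurableSpace X] [OpensMeasurableSpace X] (μ : Measure X) [μ.IsOpenPosMeasure]
    (s : Set X) : closure (interior s) ⊆ (μ.restrict s).support := by
  refine closure_minimal ?_ isClosed_support
  simpa [support_eq_univ] using interior_inter_support (μ := μ) (s := s)

theorem closure_interior_prod_subset_support_prod_restrict {X Y : Type*} [TopologicalSpace X]
    [TopologicalSpace Y] [MeasurableSpace X] [MeasurableSpace Y] [OpensMeasurableSpace (X × Y)]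
    (μ : Measure X) (ν : Measure Y) [SFinite μ] [SFinite ν] [μ.IsOpenPosMeasure]
    [ν.IsOpenPosMeasure] (s : Set X) (t : Set Y) :
    closure (interior s) ×ˢ closure (interior t) ⊆ ((μ.restrict s).prod (ν.restrict t)).support := by
  rw [prod_restrict, ← closure_prod_eq, ← interior_prod_eq]
  exact closure_interior_subset_support_restrict _ _

end MeasureTheory.Measure

section LiminfLimsup

variable {β α : Type*} [ConditionallyCompleteLinearOrder α] [TopologicalSpace α] [OrderTopology α]
  {f : Filter β} [f.NeBot] {u : β → α} {a : α}

theorem liminf_eq_of_mapClusterPt (hbdd : IsBoundedUnder (· ≤ ·) f u) (hle : ∀ᶠ n in f, a ≤ u n)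
    (ha : MapClusterPt a f u) : liminf u f = a :=
  le_antisymm (ha.liminf_le (isBoundedUnder_of_eventually_ge hle))
    (le_liminf_of_le hbdd.isCoboundedUnder_ge hle)

theorem limsup_eq_of_mapClusterPt (hbdd : IsBoundedUnder (· ≥ ·) f u) (hle : ∀ᶠ n in f, u n ≤ a)
    (ha : MapClusterPt a f u) : limsup u f = a :=
  liminf_eq_of_mapClusterPt (α := αᵒᵈ) hbdd hle ha

end LiminfLimsup

section UnitCube

def unitCube (ι : Type*) : Set (EuclideanSpace ℝ ι) := {x | ∀ i, x i ∈ Icc (0 : ℝ) 1}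

theorem unitCube_eq_preimage_pi (ι : Type*) :
    unitCube ι = PiLp.homeomorph 2 (fun _ : ι => ℝ) ⁻¹' pi univ fun _ => Icc 0 1 := by
  ext x
  simp only [unitCube, mem_ofPred_eq, mem_preimage, mem_univ_pi]
  rfl

theorem isClosed_unitCube (ι : Type*) : IsClosed (unitCube ι) := by
  rw [unitCube_eq_preimage_pi]
  exact (isClosed_set_pi fun _ _ => isClosed_Icc).preimage (Homeomorph.continuous _)

theorem closure_interior_unitCube (ι : Type*) [Finite ι] :
    closure (interior (unitCube ι)) = unitCube ι := by
  rw [unitCube_eq_preimage_pi, ← Homeomorph.preimage_interior, ← Homeomorph.preimage_closure,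
    interior_pi_set finite_univ, closure_pi_set]
  simp only [interior_Icc, closure_Ioo zero_ne_one]

theorem dist_le_sqrt_card_of_mem_unitCube {ι : Type*} [Fintype ι] {x y : EuclideanSpace ℝ ι}
    (hx : x ∈ unitCube ι) (hy : y ∈ unitCube ι) : dist x y ≤ √(Fintype.card ι) := by
  rw [EuclideanSpace.dist_eq]
  gcongr
  calc ∑ i, dist (x i) (y i) ^ 2 ≤ ∑ _i : ι, (1 : ℝ) := by
        gcongr with i
        have := Real.dist_le_of_mem_Icc_01 (hx i) (hy i)
        nlinarith [dist_nonneg (x := x i) (y := y i)]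
    _ = Fintype.card ι := by simp

theorem dist_zero_one_eq_sqrt_card (ι : Type*) [Fintype ι] :
    dist (0 : EuclideanSpace ℝ ι) (WithLp.toLp 2 1) = √(Fintype.card ι) := by
  simp [EuclideanSpace.dist_eq]

end UnitCube

theorem ae_pair_liYorke_general (d : ℕ) (hd : d = 2 ∨ d = 3)
    (F : EuclideanSpace ℝ (Fin d) → EuclideanSpace ℝ (Fin d))
    (μ : Measure (EuclideanSpace ℝ (Fin d)))
    (hμ : μ = (volume : Measure (EuclideanSpace ℝ (Fin d))).restrict
      {x | ∀ i, x i ∈ Set.Icc (0 : ℝ) 1})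
    [IsProbabilityMeasure μ]
    (hwm : Ergodic (fun p : EuclideanSpace ℝ (Fin d) × EuclideanSpace ℝ (Fin d) =>
      (F p.1, F p.2)) (μ.prod μ)) :
    ∀ᵐ p ∂(μ.prod μ),
      p.1 ≠ p.2 ∧
      Filter.liminf (fun n : ℕ => dist (F^[n] p.1) (F^[n] p.2)) atTop = 0 ∧
      Filter.limsup (fun n : ℕ => dist (F^[n] p.1) (F^[n] p.2)) atTop = Real.sqrt d := by
  have : NeZero d := ⟨by omega⟩
  change Ergodic (Prod.map F F) (μ.prod μ) at hwm
  set K := unitCube (Fin d)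
  replace hμ : μ = volume.restrict K := hμ
  have : NullSingletonClass μ := hμ ▸ inferInstance
  have hsupp : K ×ˢ K ⊆ (μ.prod μ).support := by
    simpa only [hμ, K, closure_interior_unitCube] using
      Measure.closure_interior_prod_subset_support_prod_restrict volume volume K K
  have hK : ∀ᵐ p ∂(μ.prod μ), p ∈ K ×ˢ K := by
    rw [hμ, Measure.prod_restrict]
    exact ae_restrict_mem ((isClosed_unitCube _).prod (isClosed_unitCube _)).measurableSet
  have h0 : 0 ∈ K := fun i => by simp
  have h1 : WithLp.toLp 2 1 ∈ K := fun i => by simp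
  filter_upwards [Measure.ae_prod_fst_ne_snd μ μ, hwm.ae_mapClusterPt_dist_of_mem_support,
    hwm.toMeasurePreserving.ae_forall_iterate_mem hK]
    with p hne hclus horbit
  simp only [Prod.map_iterate, mem_prod, Prod.map_fst, Prod.map_snd] at horbit
  have hbdd : ∀ n, dist (F^[n] p.1) (F^[n] p.2) ∈ Icc 0 √d := fun n =>
    ⟨dist_nonneg, by simpa using dist_le_sqrt_card_of_mem_unitCube (horbit n).1 (horbit n).2⟩
  have hclus_zero := hclus (0, 0) (hsupp ⟨h0, h0⟩)
  have hclus_sqrt := hclus (0, WithLp.toLp 2 1) (hsupp ⟨h0, h1⟩)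
  rw [dist_self] at hclus_zero
  rw [dist_zero_one_eq_sqrt_card, Fintype.card_fin] at hclus_sqrt
  exact ⟨hne,
    liminf_eq_of_mapClusterPt (isBoundedUnder_of ⟨_, fun n => (hbdd n).2⟩)
      (.of_forall fun n => (hbdd n).1) hclus_zero,
    limsup_eq_of_mapClusterPt (isBoundedUnder_of ⟨_, fun n => (hbdd n).1⟩)
      (.of_forall fun n => (hbdd n).2) hclus_sqrt⟩

/-- if `F` preserves Lebesgue measure on the unit cube `[0,1]^d`
(`d = 2` or `3`) and `(F, Leb)` is weak mixing (i.e. the product system is ergodic),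
then Lebesgue-a.e. pair of points is a Li–Yorke pair:
`liminf dist(Fⁿx, Fⁿy) = 0` and `limsup dist(Fⁿx, Fⁿy) = √d`. -/
theorem ae_pair_liYorke (d : ℕ) (hd : d = 2 ∨ d = 3)
    (F : EuclideanSpace ℝ (Fin d) → EuclideanSpace ℝ (Fin d))
    (μ : Measure (EuclideanSpace ℝ (Fin d)))
    (hμ : μ = (volume : Measure (EuclideanSpace ℝ (Fin d))).restrict
      {x | ∀ i, x i ∈ Set.Icc (0 : ℝ) 1})
    [IsProbabilityMeasure μ]
    (hpres : MeasurePreserving F μ μ)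
    (hwm : Ergodic (fun p : EuclideanSpace ℝ (Fin d) × EuclideanSpace ℝ (Fin d) =>
      (F p.1, F p.2)) (μ.prod μ)) :
    ∀ᵐ p ∂(μ.prod μ),
      p.1 ≠ p.2 ∧
      Filter.liminf (fun n : ℕ => dist (F^[n] p.1) (F^[n] p.2)) atTop = 0 ∧
      Filter.limsup (fun n : ℕ => dist (F^[n] p.1) (F^[n] p.2)) atTop = Real.sqrt d :=
  ae_pair_liYorke_general d hd F μ hμ hwm
end
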